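/- arXiv:2102.08627 — 13 statements merged into one kernel-verified Lean document; each statement's English description precedes it below -/
import Mathlib

section
/- Let 𝓘 be the family of transformations T : [0,1) → [0,1) for which there exist a finite partition [a₀,a₁),…,[a_{K-1},a_K) of [0,1) with a₀ < ⋯ < a_K and a slope s > 1 such that for all k, a_{k+1} - a_k ≤ 1/s and T(x) = s(x - a_k) for x ∈ [a_k, a_{k+1}). Then 𝓘 is closed under composition: if S, T ∈ 𝓘 then T ∘ S ∈ 𝓘. -/
/-- The family 𝓘 of piecewise linear maps of `[0,1)` with constant slope `s > 1`,
vanishing at the left endpoint of each partition piece, whose pieces have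
length at most `1/s`. -/
def MemPiecewiseFamily (T : ℝ → ℝ) : Prop :=
  ∃ (K : ℕ) (a : ℕ → ℝ) (s : ℝ),
    1 < s ∧ 0 < K ∧ a 0 = 0 ∧ a K = 1 ∧
    (∀ k < K, a k < a (k + 1)) ∧
    (∀ k < K, a (k + 1) - a k ≤ 1 / s) ∧
    (∀ k < K, ∀ x : ℝ, a k ≤ x → x < a (k + 1) → T x = s * (x - a k))

/-- the family 𝓘 is closed under composition. -/
theorem memPiecewiseFamily_comp (S T : ℝ → ℝ)
    (hS : MemPiecewiseFamily S) (hT : MemPiecewiseFamily T) :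
    MemPiecewiseFamily (T ∘ S) := by
  classical
  obtain ⟨K, a, s, hs, hK, ha0, haK, halt, hagap, haf⟩ := hS
  obtain ⟨L, b, t, ht, hL, hb0, hbL, hblt, hbgap, hbf⟩ := hT
  have hs0 : (0:ℝ) < s := lt_trans one_pos hs
  have ht0 : (0:ℝ) < t := lt_trans one_pos ht
  have bmono : ∀ i j : ℕ, i ≤ j → j ≤ L → b i ≤ b j := by
    intro i j hij hjL
    induction j with
    | zero => simp [Nat.le_zero.mp hij]
    | succ n ih =>
      rcases Nat.lt_or_ge i (n+1) with h | h
      · exact le_trans (ih (Nat.lt_succ_iff.mp h) (le_trans (Nat.le_succ n) hjL))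
          (le_of_lt (hblt n (by omega)))
      · have : i = n + 1 := le_antisymm hij h
        simp [this]
  have hb_nonneg : ∀ j, j ≤ L → 0 ≤ b j := by
    intro j hj
    have := bmono 0 j (Nat.zero_le _) hj
    linarith [this, hb0.le, hb0.ge]
  -- the refined breakpoint set
  set Z0 : Finset ℝ := (Finset.range K ×ˢ Finset.range L).image
    (fun p => if a p.1 + b p.2 / s < a (p.1 + 1) then a p.1 + b p.2 / s else 0) with hZ0
  have h0lta1 : (0:ℝ) < a 1 := by have := halt 0 hK; linarith [ha0.le, ha0.ge]
  have memZ0' : ∀ k, k < K → ∀ j, j < L → a k + b j / s < a (k+1) → a k + b j / s ∈ Z0 := by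
    intro k hk j hj hlt
    rw [hZ0]
    apply Finset.mem_image.mpr
    exact ⟨(k, j), Finset.mem_product.mpr ⟨Finset.mem_range.mpr hk, Finset.mem_range.mpr hj⟩,
      by simp [hlt]⟩
  have h0mem : (0:ℝ) ∈ Z0 := by
    have h : a 0 + b 0 / s = 0 := by rw [ha0, hb0]; simp
    have := memZ0' 0 hK 0 hL (by rw [h]; exact h0lta1)
    rwa [h] at this
  have memZ0 : ∀ z ∈ Z0, ∃ k, k < K ∧ ∃ j, j < L ∧ z = a k + b j / s ∧ z < a (k+1) := by
    intro z hz
    rw [hZ0] at hz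
    obtain ⟨p, hp, hpz⟩ := Finset.mem_image.mp hz
    obtain ⟨hp1, hp2⟩ := Finset.mem_product.mp hp
    rw [Finset.mem_range] at hp1 hp2
    by_cases h : a p.1 + b p.2 / s < a (p.1 + 1)
    · rw [if_pos h] at hpz
      exact ⟨p.1, hp1, p.2, hp2, hpz.symm, hpz ▸ h⟩
    · rw [if_neg h] at hpz
      refine ⟨0, hK, 0, hL, ?_, ?_⟩
      · rw [← hpz, ha0, hb0]; simp
      · rw [← hpz]; exact h0lta1
  -- the step predicate
  set P : ℝ → ℝ → Prop := fun z w =>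
    (w ∈ Z0 ∨ w = 1) ∧ z < w ∧ w - z ≤ 1 / (t * s) ∧
      ∀ x : ℝ, z ≤ x → x < w → T (S x) = t * s * (x - z) with hP
  have step : ∀ z ∈ Z0, ∃ w, P z w := by
    intro z hz
    obtain ⟨k, hk, j, hj, hzeq, hzlt⟩ := memZ0 z hz
    have hbj : b j < b (j+1) := hblt j hj
    have hbj0 : 0 ≤ b j := hb_nonneg j hj.le
    have hakz : a k ≤ z := by
      rw [hzeq]
      have : 0 ≤ b j / s := div_nonneg hbj0 hs0.le
      linarith
    refine ⟨min (a (k+1)) (a k + b (j+1) / s), ?_, ?_, ?_, ?_⟩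
    · -- membership
      rcases lt_or_ge (a k + b (j+1) / s) (a (k+1)) with hlt | hge
      · have hmin : min (a (k+1)) (a k + b (j+1) / s) = a k + b (j+1) / s :=
          min_eq_right hlt.le
        have hj1 : j + 1 < L := by
          by_contra h
          have hjL : j + 1 = L := by omega
          have hb1 : b (j+1) = 1 := by rw [hjL, hbL]
          have hg := hagap k hk
          rw [hb1] at hlt
          have : a (k+1) - a k ≤ 1 / s := hg
          linarith
        left; rw [hmin]; exact memZ0' k hk (j+1) hj1 hlt
      · have hmin : min (a (k+1)) (a k + b (j+1) / s) = a (k+1) := min_eq_left hge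
        rcases Nat.lt_or_ge (k+1) K with hk1 | hk1
        · left; rw [hmin]
          have heq : a (k+1) = a (k+1) + b 0 / s := by rw [hb0]; simp
          rw [heq]
          apply memZ0' (k+1) hk1 0 hL
          rw [hb0]
          simpa using halt (k+1) hk1
        · right; rw [hmin]
          have : k + 1 = K := by omega
          rw [this, haK]
    · -- z < w
      rw [lt_min_iff]
      refine ⟨hzlt, ?_⟩
      rw [hzeq]
      have : b j / s < b (j+1) / s := by gcongr
      linarith
    · -- gap bound
      have h1 : min (a (k+1)) (a k + b (j+1) / s) ≤ a k + b (j+1) / s := min_le_right _ _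
      have h2 : b (j+1) - b j ≤ 1 / t := hbgap j hj
      have h3 : (b (j+1) - b j) / s ≤ (1/t) / s := by gcongr
      have h4 : (1/t)/s = 1/(t*s) := by rw [div_div]
      have h5 : z = a k + b j / s := hzeq
      have : min (a (k+1)) (a k + b (j+1) / s) - z ≤ (b (j+1) - b j) / s := by
        rw [h5]; rw [sub_div] at *; linarith [h1]
      linarith [h3, h4 ▸ h3, this]
    · -- the formula
      intro x hzx hxw
      have hax : a k ≤ x := le_trans hakz hzx
      have hxa1 : x < a (k+1) := lt_of_lt_of_le hxw (min_le_left _ _)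
      have hSx : S x = s * (x - a k) := haf k hk x hax hxa1
      have hbjeq : s * (z - a k) = b j := by
        rw [hzeq]
        field_simp
        ring
      have hylb : b j ≤ s * (x - a k) := by nlinarith
      have hyub : s * (x - a k) < b (j+1) := by
        have hxw' : x < a k + b (j+1) / s := lt_of_lt_of_le hxw (min_le_right _ _)
        have hkey : s * (b (j+1) / s) = b (j+1) := by field_simp
        nlinarith
      have hTy : T (s * (x - a k)) = t * (s * (x - a k) - b j) := hbf j hj _ hylb hyub
      rw [hSx, hTy]
      nlinarith [hbjeq]
  -- the iteration
  set f : ℝ → ℝ := fun z => if h : ∃ w, P z w then h.choose else 2 with hfdef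
  set c : ℕ → ℝ := fun n => f^[n] 0 with hcdef
  have hc0 : c 0 = 0 := rfl
  have hcsucc : ∀ n, c (n+1) = f (c n) := by
    intro n
    rw [hcdef]
    exact Function.iterate_succ_apply' f n 0
  have hPf : ∀ z, z ∈ Z0 → P z (f z) := by
    intro z hz
    have h := step z hz
    rw [hfdef]
    simp only
    rw [dif_pos h]
    exact h.choose_spec
  have good : ∀ n, (∀ m, m < n → c m ≠ 1) → c n ∈ Z0 ∨ c n = 1 := by
    intro n
    induction n with
    | zero => intro _; left; rw [hc0]; exact h0mem
    | succ n ih =>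
      intro h
      have hn : c n ∈ Z0 := by
        rcases ih (fun m hm => h m (by omega)) with h' | h'
        · exact h'
        · exact absurd h' (h n (by omega))
      have := (hPf (c n) hn).1
      rwa [← hcsucc n] at this
  have hex : ∃ n, c n = 1 := by
    by_contra hcon
    push_neg at hcon
    have hmemall : ∀ n, c n ∈ Z0 := by
      intro n
      rcases good n (fun m _ => hcon m) with h | h
      · exact h
      · exact absurd h (hcon n)
    have hmonostep : ∀ n, c n < c (n+1) := by
      intro n
      have := (hPf (c n) (hmemall n)).2.1
      rwa [← hcsucc n] at this
    have hsm : StrictMono c := strictMono_nat_of_lt_succ hmonostep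
    have hinf : (↑Z0 : Set ℝ).Infinite :=
      Set.infinite_of_injective_forall_mem hsm.injective (fun n => hmemall n)
    exact hinf (Z0.finite_toSet)
  set M := Nat.find hex with hM
  have hcM : c M = 1 := Nat.find_spec hex
  have hMpos : 0 < M := by
    rcases Nat.eq_zero_or_pos M with h | h
    · exfalso
      rw [h, hc0] at hcM
      norm_num at hcM
    · exact h
  have hne1 : ∀ k, k < M → c k ≠ 1 := fun k hk => Nat.find_min hex hk
  have hmemlt : ∀ k, k < M → c k ∈ Z0 := by
    intro k hk
    rcases good k (fun m hm => hne1 m (by omega)) with h | h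
    · exact h
    · exact absurd h (hne1 k hk)
  have hPk : ∀ k, k < M → P (c k) (c (k+1)) := by
    intro k hk
    have := hPf (c k) (hmemlt k hk)
    rwa [← hcsucc k] at this
  refine ⟨M, c, t * s, ?_, hMpos, hc0, hcM, ?_, ?_, ?_⟩
  · nlinarith
  · intro k hk; exact (hPk k hk).2.1
  · intro k hk; exact (hPk k hk).2.2.1
  · intro k hk x h1 h2
    exact (hPk k hk).2.2.2 x h1 h2
end

section
/- Let β = (β₀,…,β_{p-1}) be an alternate base and let x ∈ [0, x_β) and n ∈ ℕ. Then π₂ ∘ T_β^n ∘ δ₀(x) = β_{n-1}⋯β₀ x − Σ_{k=0}^{n-1} β_{n-1}⋯β_{k+1} c_k, where (c₀,…,c_{n-1}) is the lexicographically greatest n-tuple in ∏_{k=0}^{n-1} {0,…,⌈β_k⌉−1} such that (Σ_{k=0}^{n-1} β_{n-1}⋯β_{k+1} c_k)/(β_{n-1}⋯β₀) ≤ x. -/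
noncomputable def gyAux (β : ℕ → ℝ) (x : ℝ) : ℕ → ℝ
  | 0 => x
  | k + 1 =>
      if gyAux β x k < 1 then β k * gyAux β x k - ⌊β k * gyAux β x k⌋
      else β k * gyAux β x k - ((⌈β k⌉ : ℝ) - 1)

noncomputable def gdAux (β : ℕ → ℝ) (x : ℝ) (k : ℕ) : ℕ :=
  if gyAux β x k < 1 then (⌊β k * gyAux β x k⌋).toNat else (⌈β k⌉ - 1).toNat

lemma gyAux_nonneg (β : ℕ → ℝ) (hβ : ∀ n, 1 < β n) (x : ℝ) (hx : 0 ≤ x) :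
    ∀ k, 0 ≤ gyAux β x k := by
  intro k
  induction k with
  | zero => exact hx
  | succ k ih =>
      have hb : (0:ℝ) < β k := lt_trans one_pos (hβ k)
      show 0 ≤ (if gyAux β x k < 1 then β k * gyAux β x k - ⌊β k * gyAux β x k⌋
          else β k * gyAux β x k - ((⌈β k⌉ : ℝ) - 1))
      split
      · have := Int.floor_le (β k * gyAux β x k)
        linarith
      · rename_i h
        push_neg at h
        have h1 : (⌈β k⌉ : ℝ) < β k + 1 := Int.ceil_lt_add_one _
        have h2 : β k ≤ β k * gyAux β x k := by nlinarith
        linarith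

lemma gdAux_cast (β : ℕ → ℝ) (hβ : ∀ n, 1 < β n) (x : ℝ) (hx : 0 ≤ x) (k : ℕ) :
    (gdAux β x k : ℝ) =
      if gyAux β x k < 1 then ((⌊β k * gyAux β x k⌋ : ℤ) : ℝ) else (⌈β k⌉ : ℝ) - 1 := by
  have hb : (0:ℝ) < β k := lt_trans one_pos (hβ k)
  have hy := gyAux_nonneg β hβ x hx k
  unfold gdAux
  split
  · have h0 : ((⌊β k * gyAux β x k⌋.toNat : ℤ)) = ⌊β k * gyAux β x k⌋ :=
      Int.toNat_of_nonneg (Int.floor_nonneg.2 (mul_nonneg hb.le hy))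
    exact_mod_cast h0
  · have h1 : (1:ℤ) ≤ ⌈β k⌉ := by
      have : (0:ℝ) < β k := hb
      exact_mod_cast Int.ceil_pos.2 this
    have h0 : (((⌈β k⌉ - 1).toNat : ℤ)) = ⌈β k⌉ - 1 := Int.toNat_of_nonneg (by omega)
    have h2 : (((⌈β k⌉ - 1).toNat : ℕ) : ℝ) = ((⌈β k⌉ - 1 : ℤ) : ℝ) := by exact_mod_cast h0
    rw [h2]
    push_cast
    ring

lemma gyAux_succ (β : ℕ → ℝ) (hβ : ∀ n, 1 < β n) (x : ℝ) (hx : 0 ≤ x) (k : ℕ) :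
    gyAux β x (k + 1) = β k * gyAux β x k - gdAux β x k := by
  rw [gdAux_cast β hβ x hx k]
  show (if gyAux β x k < 1 then β k * gyAux β x k - ⌊β k * gyAux β x k⌋
      else β k * gyAux β x k - ((⌈β k⌉ : ℝ) - 1)) = _
  split <;> rename_i h <;> simp [h]

lemma gdAux_adm (β : ℕ → ℝ) (hβ : ∀ n, 1 < β n) (x : ℝ) (hx : 0 ≤ x) (k : ℕ) :
    (gdAux β x k : ℝ) ≤ (⌈β k⌉ : ℝ) - 1 := by
  have hb : (0:ℝ) < β k := lt_trans one_pos (hβ k)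
  have hy := gyAux_nonneg β hβ x hx k
  rw [gdAux_cast β hβ x hx k]
  split
  · rename_i h
    have h1 : β k * gyAux β x k < β k := by nlinarith
    have h2 : β k ≤ (⌈β k⌉ : ℝ) := Int.le_ceil _
    have h3 : ⌊β k * gyAux β x k⌋ < ⌈β k⌉ := by
      have := Int.floor_le (β k * gyAux β x k)
      exact_mod_cast lt_of_le_of_lt (Int.floor_le (β k * gyAux β x k) : (⌊β k * gyAux β x k⌋:ℝ) ≤ _) (lt_of_lt_of_le h1 h2)
    have : ⌊β k * gyAux β x k⌋ ≤ ⌈β k⌉ - 1 := by omega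
    calc ((⌊β k * gyAux β x k⌋ : ℤ) : ℝ) ≤ ((⌈β k⌉ - 1 : ℤ) : ℝ) := by exact_mod_cast this
      _ = (⌈β k⌉ : ℝ) - 1 := by push_cast; ring
  · exact le_refl _

lemma gyAux_formula (β : ℕ → ℝ) (hβ : ∀ n, 1 < β n) (x : ℝ) (hx : 0 ≤ x) (n : ℕ) :
    gyAux β x n = (∏ j ∈ Finset.range n, β j) * x -
      ∑ k ∈ Finset.range n, (∏ j ∈ Finset.Ico (k + 1) n, β j) * (gdAux β x k : ℝ) := by
  induction n with
  | zero => simp [gyAux]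
  | succ n ih =>
      rw [gyAux_succ β hβ x hx n, ih, Finset.sum_range_succ, Finset.prod_range_succ]
      have hsum : ∑ k ∈ Finset.range n, (∏ j ∈ Finset.Ico (k + 1) (n + 1), β j) * (gdAux β x k : ℝ)
          = β n * ∑ k ∈ Finset.range n, (∏ j ∈ Finset.Ico (k + 1) n, β j) * (gdAux β x k : ℝ) := by
        rw [Finset.mul_sum]
        refine Finset.sum_congr rfl fun k hk => ?_
        have hkn : k + 1 ≤ n := Finset.mem_range.1 hk
        rw [Finset.prod_Ico_succ_top hkn]
        ring
      rw [hsum, Finset.Ico_self, Finset.prod_empty]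
      ring

/-- the `n`-th iterate of the extended greedy `β`-transformation,
started at `(0, x)` with `x ∈ [0, x_β)`, computes
`β_{n-1}⋯β₀ x − Σ_{k<n} β_{n-1}⋯β_{k+1} c_k` where `(c₀,…,c_{n-1})` is the
lexicographically greatest tuple of admissible digits with
`(Σ_{k<n} β_{n-1}⋯β_{k+1} c_k)/(β_{n-1}⋯β₀) ≤ x`. -/
theorem extended_greedy_iterate_eq_lex_greatest
    (p : ℕ) (hp : 1 ≤ p) (β : ℕ → ℝ)
    (hβ : ∀ n, 1 < β n) (hper : ∀ n, β (n + p) = β n)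
    (xB : ℕ → ℝ)
    (hxB : ∀ i, xB i =
      ∑' m : ℕ, ((⌈β (i + m)⌉ : ℝ) - 1) / ∏ k ∈ Finset.range (m + 1), β (i + k))
    (T : ℕ × ℝ → ℕ × ℝ)
    (hT : ∀ i x, T (i, x) =
      ((i + 1) % p,
        if x < 1 then β i * x - ⌊β i * x⌋ else β i * x - ((⌈β i⌉ : ℝ) - 1)))
    (x : ℝ) (hx0 : 0 ≤ x) (hx1 : x < xB 0) (n : ℕ)
    (c : ℕ → ℕ)
    (hcb : ∀ k < n, (c k : ℝ) ≤ (⌈β k⌉ : ℝ) - 1)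
    (hcle : (∑ k ∈ Finset.range n, (∏ j ∈ Finset.Ico (k + 1) n, β j) * c k) /
        ∏ j ∈ Finset.range n, β j ≤ x)
    (hcmax : ∀ c' : ℕ → ℕ, (∀ k < n, (c' k : ℝ) ≤ (⌈β k⌉ : ℝ) - 1) →
      (∑ k ∈ Finset.range n, (∏ j ∈ Finset.Ico (k + 1) n, β j) * c' k) /
          ∏ j ∈ Finset.range n, β j ≤ x →
      ¬ ∃ j < n, (∀ k < j, c k = c' k) ∧ c j < c' j) :
    (T^[n] (0, x)).2 =
      (∏ j ∈ Finset.range n, β j) * x -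
        ∑ k ∈ Finset.range n, (∏ j ∈ Finset.Ico (k + 1) n, β j) * c k := by
  have hbpos : ∀ k, (0:ℝ) < β k := fun k => lt_trans one_pos (hβ k)
  -- periodicity modulo p
  have hmulp : ∀ m r, β (r + m * p) = β r := by
    intro m
    induction m with
    | zero => simp
    | succ m ih =>
        intro r
        have h : r + (m + 1) * p = (r + m * p) + p := by ring
        rw [h, hper, ih]
  have hβmod : ∀ k, β (k % p) = β k := by
    intro k
    conv_rhs => rw [← Nat.mod_add_div k p]
    rw [show k % p + p * (k / p) = k % p + (k / p) * p by ring, hmulp]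
  -- the iterate computes gyAux
  have hiter : ∀ m, T^[m] (0, x) = (m % p, gyAux β x m) := by
    intro m
    induction m with
    | zero => simp [Nat.zero_mod, gyAux]
    | succ m ih =>
        rw [Function.iterate_succ_apply', ih, hT, hβmod]
        have h1 : (m % p + 1) % p = (m + 1) % p := Nat.mod_add_mod m p 1 ▸ rfl
        rw [h1]
        rfl
  -- positivity of products
  have hPpos : ∀ s : Finset ℕ, (0:ℝ) < ∏ j ∈ s, β j :=
    fun s => Finset.prod_pos fun j _ => hbpos j
  -- gd digits satisfy the sum bound
  have hgd_sum : (∑ k ∈ Finset.range n, (∏ j ∈ Finset.Ico (k + 1) n, β j) * (gdAux β x k : ℝ)) /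
      ∏ j ∈ Finset.range n, β j ≤ x := by
    have hyn := gyAux_nonneg β hβ x hx0 n
    have hf := gyAux_formula β hβ x hx0 n
    rw [div_le_iff₀ (hPpos (Finset.range n))]
    nlinarith [hPpos (Finset.range n)]
  -- key: c agrees with gd on range n
  have key : ∀ k, k < n → c k = gdAux β x k := by
    intro k
    induction k using Nat.strong_induction_on with
    | _ k IH =>
        intro hk
        rcases lt_trichotomy (c k) (gdAux β x k) with h | h | h
        · exfalso
          exact hcmax (gdAux β x) (fun j _ => gdAux_adm β hβ x hx0 j) hgd_sum
            ⟨k, hk, fun j hj => IH j hj (hj.trans hk), h⟩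
        · exact h
        · exfalso
          by_cases hcase : gyAux β x k < 1
          · -- greedy digit maximal: sum of c exceeds x
            have hd : (gdAux β x k : ℝ) = ((⌊β k * gyAux β x k⌋ : ℤ) : ℝ) := by
              rw [gdAux_cast β hβ x hx0 k, if_pos hcase]
            have hfloor : β k * gyAux β x k < (gdAux β x k : ℝ) + 1 := by
              rw [hd]; exact Int.lt_floor_add_one _
            set Q := ∏ j ∈ Finset.Ico (k + 1) n, β j with hQ
            have hQpos : (0:ℝ) < Q := hPpos _
            have hkn : k + 1 ≤ n := hk
            -- identity: x * P_n = Σ_{j<k} gd-terms + (Ico k n prod) * gy k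
            have hfk := gyAux_formula β hβ x hx0 k
            have hprodsplit : (∏ j ∈ Finset.range k, β j) * ∏ j ∈ Finset.Ico k n, β j
                = ∏ j ∈ Finset.range n, β j := Finset.prod_range_mul_prod_Ico β (le_of_lt hk)
            have hIcosplit : ∀ j, j < k → (∏ i ∈ Finset.Ico (j + 1) k, β i) * ∏ i ∈ Finset.Ico k n, β i
                = ∏ i ∈ Finset.Ico (j + 1) n, β i := fun j hj =>
              Finset.prod_Ico_consecutive β hj (le_of_lt hk)
            have hIcobot : ∏ j ∈ Finset.Ico k n, β j = β k * Q :=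
              Finset.prod_eq_prod_Ico_succ_bot hk β
            have hid : x * ∏ j ∈ Finset.range n, β j =
                (∑ j ∈ Finset.range k, (∏ i ∈ Finset.Ico (j + 1) n, β i) * (gdAux β x j : ℝ))
                  + (β k * Q) * gyAux β x k := by
              have h2 : (∏ j ∈ Finset.Ico k n, β j) * gyAux β x k =
                  (∏ j ∈ Finset.Ico k n, β j) * ((∏ j ∈ Finset.range k, β j) * x)
                  - ∑ j ∈ Finset.range k, (∏ i ∈ Finset.Ico (j + 1) n, β i) * (gdAux β x j : ℝ) := by
                rw [hfk, mul_sub, Finset.mul_sum]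
                congr 1
                refine Finset.sum_congr rfl fun j hj => ?_
                rw [← hIcosplit j (Finset.mem_range.1 hj)]
                ring
              rw [← hIcobot]
              have h3 : (∏ j ∈ Finset.Ico k n, β j) * ((∏ j ∈ Finset.range k, β j) * x)
                  = x * ∏ j ∈ Finset.range n, β j := by rw [← hprodsplit]; ring
              linarith [h2, h3.symm ▸ h2]
            -- lower bound on the c-sum
            have hcsplit : ∑ j ∈ Finset.range n, (∏ i ∈ Finset.Ico (j + 1) n, β i) * (c j : ℝ)
                = (∑ j ∈ Finset.range (k + 1), (∏ i ∈ Finset.Ico (j + 1) n, β i) * (c j : ℝ))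
                  + ∑ j ∈ Finset.Ico (k + 1) n, (∏ i ∈ Finset.Ico (j + 1) n, β i) * (c j : ℝ) :=
              (Finset.sum_range_add_sum_Ico _ hkn).symm
            have htail : (0:ℝ) ≤ ∑ j ∈ Finset.Ico (k + 1) n, (∏ i ∈ Finset.Ico (j + 1) n, β i) * (c j : ℝ) :=
              Finset.sum_nonneg fun j _ => mul_nonneg (hPpos _).le (Nat.cast_nonneg _)
            have hhead : ∑ j ∈ Finset.range (k + 1), (∏ i ∈ Finset.Ico (j + 1) n, β i) * (c j : ℝ)
                = (∑ j ∈ Finset.range k, (∏ i ∈ Finset.Ico (j + 1) n, β i) * (gdAux β x j : ℝ))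
                  + Q * (c k : ℝ) := by
              rw [Finset.sum_range_succ]
              congr 1
              refine Finset.sum_congr rfl fun j hj => ?_
              rw [IH j (Finset.mem_range.1 hj) ((Finset.mem_range.1 hj).trans hk)]
            have hck : (gdAux β x k : ℝ) + 1 ≤ (c k : ℝ) := by exact_mod_cast h
            have hSle : ∑ j ∈ Finset.range n, (∏ i ∈ Finset.Ico (j + 1) n, β i) * (c j : ℝ)
                ≤ x * ∏ j ∈ Finset.range n, β j := by
              exact (div_le_iff₀ (hPpos (Finset.range n))).1 hcle
            have hy0 := gyAux_nonneg β hβ x hx0 k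
            nlinarith [mul_lt_mul_of_pos_left hfloor hQpos, mul_le_mul_of_nonneg_left hck hQpos.le]
          · -- here the greedy digit is already maximal admissible
            push_neg at hcase
            have hd : (gdAux β x k : ℝ) = (⌈β k⌉ : ℝ) - 1 := by
              rw [gdAux_cast β hβ x hx0 k, if_neg (not_lt.2 hcase)]
            have hck : (gdAux β x k : ℝ) + 1 ≤ (c k : ℝ) := by exact_mod_cast h
            have := hcb k hk
            linarith [hd ▸ hck]
  -- conclude
  rw [hiter n]
  show gyAux β x n = _
  rw [gyAux_formula β hβ x hx0 n]
  congr 1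
  refine Finset.sum_congr rfl fun k hk => ?_
  rw [key k (Finset.mem_range.1 hk)]
end

section
/- Let β₀,…,β_{n-1} > 1 be real numbers and let x ∈ [0,1). Then T_{β_{n-1}} ∘ ⋯ ∘ T_{β₀}(x) = β_{n-1}⋯β₀ x − Σ_{k=0}^{n-1} β_{n-1}⋯β_{k+1} c_k, where (c₀,…,c_{n-1}) is the lexicographically greatest n-tuple in ∏_{k=0}^{n-1} {0,…,⌈β_k⌉−1} such that (Σ_{k=0}^{n-1} β_{n-1}⋯β_{k+1} c_k)/(β_{n-1}⋯β₀) ≤ x. -/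
/-- for `x ∈ [0,1)`, the composition `T_{β_{n-1}} ∘ ⋯ ∘ T_{β₀}`
of greedy transformations computes
`β_{n-1}⋯β₀ x − Σ_{k<n} β_{n-1}⋯β_{k+1} c_k` where `(c₀,…,c_{n-1})` is the
lexicographically greatest admissible tuple with
`(Σ_{k<n} β_{n-1}⋯β_{k+1} c_k)/(β_{n-1}⋯β₀) ≤ x`.
Here `F n` denotes `T_{β_{n-1}} ∘ ⋯ ∘ T_{β₀}` (with `F 0 = id`). -/
theorem greedy_composition_eq_lex_greatest
    (β : ℕ → ℝ) (hβ : ∀ k, 1 < β k)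
    (F : ℕ → ℝ → ℝ)
    (hF0 : ∀ x : ℝ, F 0 x = x)
    (hFs : ∀ (k : ℕ) (x : ℝ), F (k + 1) x = β k * F k x - ⌊β k * F k x⌋)
    (x : ℝ) (hx0 : 0 ≤ x) (hx1 : x < 1) (n : ℕ)
    (c : ℕ → ℕ)
    (hcb : ∀ k < n, (c k : ℝ) ≤ (⌈β k⌉ : ℝ) - 1)
    (hcle : (∑ k ∈ Finset.range n, (∏ j ∈ Finset.Ico (k + 1) n, β j) * c k) /
        ∏ j ∈ Finset.range n, β j ≤ x)
    (hcmax : ∀ c' : ℕ → ℕ, (∀ k < n, (c' k : ℝ) ≤ (⌈β k⌉ : ℝ) - 1) →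
      (∑ k ∈ Finset.range n, (∏ j ∈ Finset.Ico (k + 1) n, β j) * c' k) /
          ∏ j ∈ Finset.range n, β j ≤ x →
      ¬ ∃ j < n, (∀ k < j, c k = c' k) ∧ c j < c' j) :
    F n x =
      (∏ j ∈ Finset.range n, β j) * x -
        ∑ k ∈ Finset.range n, (∏ j ∈ Finset.Ico (k + 1) n, β j) * c k := by
  -- basic facts
  have hβ0 : ∀ k, (0:ℝ) < β k := fun k => lt_trans one_pos (hβ k)
  have hPpos : ∀ m, (0:ℝ) < ∏ j ∈ Finset.range m, β j :=
    fun m => Finset.prod_pos fun j _ => hβ0 j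
  have hQpos : ∀ a b, (0:ℝ) < ∏ j ∈ Finset.Ico a b, β j :=
    fun a b => Finset.prod_pos fun j _ => hβ0 j
  -- F k x stays in [0,1)
  have hFmem : ∀ k, 0 ≤ F k x ∧ F k x < 1 := by
    intro k
    induction k with
    | zero => rw [hF0]; exact ⟨hx0, hx1⟩
    | succ k ih =>
      rw [hFs]
      constructor
      · linarith [Int.floor_le (β k * F k x)]
      · linarith [Int.lt_floor_add_one (β k * F k x)]
  -- the digits produced by the greedy algorithm
  set d : ℕ → ℕ := fun k => (⌊β k * F k x⌋).toNat with hd_def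
  have hd : ∀ k, ((d k : ℕ) : ℝ) = (⌊β k * F k x⌋ : ℝ) := by
    intro k
    have h0 : 0 ≤ β k * F k x := mul_nonneg (hβ0 k).le (hFmem k).1
    have : (0:ℤ) ≤ ⌊β k * F k x⌋ := Int.floor_nonneg.mpr h0
    have h2 := congrArg (Int.cast : ℤ → ℝ) (Int.toNat_of_nonneg this)
    simp only [hd_def]
    exact_mod_cast h2
  have hrec : ∀ k, F (k + 1) x = β k * F k x - (d k : ℝ) := by
    intro k; rw [hFs, hd]
  -- the fundamental formula for F m x
  have hFn : ∀ m, F m x = (∏ j ∈ Finset.range m, β j) * x -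
      ∑ k ∈ Finset.range m, (∏ j ∈ Finset.Ico (k + 1) m, β j) * (d k : ℝ) := by
    intro m
    induction m with
    | zero => simp [hF0]
    | succ m ih =>
      rw [hrec, ih, Finset.sum_range_succ, Finset.prod_range_succ]
      have hIco : Finset.Ico (m + 1) (m + 1) = ∅ := Finset.Ico_self _
      rw [hIco]
      have hsum : ∑ k ∈ Finset.range m, (∏ j ∈ Finset.Ico (k + 1) (m + 1), β j) * (d k : ℝ)
          = β m * ∑ k ∈ Finset.range m, (∏ j ∈ Finset.Ico (k + 1) m, β j) * (d k : ℝ) := by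
        rw [Finset.mul_sum]
        refine Finset.sum_congr rfl fun k hk => ?_
        have hk' : k + 1 ≤ m := Finset.mem_range.mp hk
        rw [Finset.prod_Ico_succ_top hk']
        ring
      rw [hsum]
      simp only [Finset.prod_empty]
      ring
  -- d is admissible
  have hdb : ∀ k < n, ((d k : ℕ) : ℝ) ≤ (⌈β k⌉ : ℝ) - 1 := by
    intro k _
    rw [hd]
    have h1 : β k * F k x < β k := by
      have := (hFmem k).2
      nlinarith [(hβ0 k), (hFmem k).1]
    have h2 : ⌊β k * F k x⌋ < ⌈β k⌉ := by
      have : β k ≤ (⌈β k⌉ : ℝ) := Int.le_ceil _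
      exact Int.floor_lt.mpr (lt_of_lt_of_le h1 this)
    have h3 : ⌊β k * F k x⌋ ≤ ⌈β k⌉ - 1 := by omega
    have h4 : ((⌊β k * F k x⌋ : ℤ) : ℝ) ≤ ((⌈β k⌉ - 1 : ℤ) : ℝ) := by exact_mod_cast h3
    push_cast at h4 ⊢
    linarith
  -- d satisfies the constraint
  have hdle : (∑ k ∈ Finset.range n, (∏ j ∈ Finset.Ico (k + 1) n, β j) * (d k : ℝ)) /
      ∏ j ∈ Finset.range n, β j ≤ x := by
    rw [div_le_iff₀ (hPpos n)]
    have h0 := (hFmem n).1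
    rw [hFn n] at h0
    linarith
  -- c ≤ P n * x
  have hcle' : ∑ k ∈ Finset.range n, (∏ j ∈ Finset.Ico (k + 1) n, β j) * (c k : ℝ)
      ≤ (∏ j ∈ Finset.range n, β j) * x := by
    rw [div_le_iff₀ (hPpos n)] at hcle
    linarith [hcle]
  -- first key step: c cannot exceed d at the first disagreement
  have hgt : ∀ j < n, (∀ k < j, c k = d k) → ¬ d j < c j := by
    intro j hj hpre h
    have hj1 : j + 1 ≤ n := hj
    set R : ℝ := ∏ i ∈ Finset.Ico (j + 1) n, β i with hR_def
    have hR1 : (1:ℝ) ≤ R := by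
      rw [hR_def]
      have h := Finset.prod_le_prod (s := Finset.Ico (j + 1) n)
        (f := fun _ => (1:ℝ)) (g := β) (fun i _ => zero_le_one) (fun i _ => (hβ i).le)
      simpa using h
    have hR0 : (0:ℝ) < R := lt_of_lt_of_le one_pos hR1
    -- from F (j+1) x < 1
    have h1 : F (j + 1) x < 1 := (hFmem (j + 1)).2
    rw [hFn (j + 1)] at h1
    have h2 : R * ((∏ j' ∈ Finset.range (j + 1), β j') * x -
        ∑ k ∈ Finset.range (j + 1), (∏ i ∈ Finset.Ico (k + 1) (j + 1), β i) * (d k : ℝ)) < R * 1 :=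
      mul_lt_mul_of_pos_left h1 hR0
    have hPsplit : (∏ j' ∈ Finset.range (j + 1), β j') * R = ∏ j' ∈ Finset.range n, β j' :=
      Finset.prod_range_mul_prod_Ico β hj1
    have hSsplit : R * ∑ k ∈ Finset.range (j + 1),
        (∏ i ∈ Finset.Ico (k + 1) (j + 1), β i) * (d k : ℝ)
        = ∑ k ∈ Finset.range (j + 1), (∏ i ∈ Finset.Ico (k + 1) n, β i) * (d k : ℝ) := by
      rw [Finset.mul_sum]
      refine Finset.sum_congr rfl fun k hk => ?_
      have hk1 : k + 1 ≤ j + 1 := Finset.mem_range.mp hk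
      rw [← Finset.prod_Ico_consecutive β hk1 hj1]
      ring
    have h3 : (∏ j' ∈ Finset.range n, β j') * x
        < ∑ k ∈ Finset.range (j + 1), (∏ i ∈ Finset.Ico (k + 1) n, β i) * (d k : ℝ) + R := by
      have := h2
      rw [mul_sub, hSsplit] at this
      nlinarith [this]
    -- lower bound on the c-sum
    have h4 : ∑ k ∈ Finset.range (j + 1), (∏ i ∈ Finset.Ico (k + 1) n, β i) * (d k : ℝ) + R
        ≤ ∑ k ∈ Finset.range (j + 1), (∏ i ∈ Finset.Ico (k + 1) n, β i) * (c k : ℝ) := by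
      rw [Finset.sum_range_succ, Finset.sum_range_succ]
      have hc_eq : ∑ k ∈ Finset.range j, (∏ i ∈ Finset.Ico (k + 1) n, β i) * (c k : ℝ)
          = ∑ k ∈ Finset.range j, (∏ i ∈ Finset.Ico (k + 1) n, β i) * (d k : ℝ) :=
        Finset.sum_congr rfl fun k hk => by rw [hpre k (Finset.mem_range.mp hk)]
      rw [hc_eq]
      have hcj : (d j : ℝ) + 1 ≤ (c j : ℝ) := by exact_mod_cast h
      have : R * ((d j : ℝ) + 1) ≤ R * (c j : ℝ) := by
        apply mul_le_mul_of_nonneg_left hcj hR0.le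
      have hRQ : (∏ i ∈ Finset.Ico (j + 1) n, β i) = R := rfl
      rw [hRQ]
      nlinarith [this]
    have h5 : ∑ k ∈ Finset.range (j + 1), (∏ i ∈ Finset.Ico (k + 1) n, β i) * (c k : ℝ)
        ≤ ∑ k ∈ Finset.range n, (∏ i ∈ Finset.Ico (k + 1) n, β i) * (c k : ℝ) := by
      apply Finset.sum_le_sum_of_subset_of_nonneg
      · exact Finset.range_subset_range.mpr hj1
      · intro k _ _
        exact mul_nonneg (hQpos _ _).le (Nat.cast_nonneg _)
    linarith [hcle', h3, h4, h5]
  -- second key step: maximality of c rules out c < d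
  have hlt := hcmax d hdb hdle
  push_neg at hlt
  -- conclude c = d on range n
  have hagree : ∀ j, j < n → c j = d j := by
    intro j
    induction j using Nat.strong_induction_on with
    | _ j ih =>
      intro hj
      have hpre : ∀ k < j, c k = d k := fun k hk => ih k hk (hk.trans hj)
      rcases lt_trichotomy (c j) (d j) with h | h | h
      · exact absurd (hlt j hj hpre) (not_le.mpr h)
      · exact h
      · exact absurd h (hgt j hj hpre)
  rw [hFn n]
  congr 1
  exact Finset.sum_congr rfl fun k hk => by rw [hagree k (Finset.mem_range.mp hk)]
end

section
/- Let β = (β₀,…,β_{p-1}) be an alternate base and for i ∈ {0,…,p−1} let μ_{β,i} be the unique absolutely continuous (T_{β_{i-1}} ∘ ⋯ ∘ T_{β_{i-p}})-invariant Borel probability measure on [0,1) (indices mod p). Then for each i, μ_{β,i} equals the pushforward of μ_{β,i-1} under T_{β_{i-1}}, i.e., μ_{β,i}(B) = μ_{β,i-1}(T_{β_{i-1}}^{-1}(B)) for all Borel B ⊆ [0,1). -/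
open MeasureTheory

/-- Preimage of a Lebesgue-null set under `Int.fract` is null. -/
lemma fract_preimage_null {N : Set ℝ} (hN : volume N = 0) :
    volume (Int.fract ⁻¹' N) = 0 := by
  have hsub : Int.fract ⁻¹' N ⊆ ⋃ n : ℤ, (fun x : ℝ => x - (n : ℝ)) ⁻¹' N := by
    intro x hx
    exact Set.mem_iUnion.2 ⟨⌊x⌋, hx⟩
  refine le_antisymm (le_trans (measure_mono hsub) ?_) zero_le
  refine le_trans (measure_iUnion_le _) ?_
  have : ∀ n : ℤ, volume ((fun x : ℝ => x - (n : ℝ)) ⁻¹' N) = 0 := by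
    intro n
    have : (fun x : ℝ => x - (n : ℝ)) ⁻¹' N = (fun x : ℝ => x + (-(n : ℝ))) ⁻¹' N := by
      simp [sub_eq_add_neg]
    rw [this, measure_preimage_add_right volume _ N, hN]
  simp [this]

/-- for an alternate base `β = (β₀,…,β_{p-1})`, let `μ i` be the
unique absolutely continuous probability measure on `[0,1)` invariant under
`T_{β_{i-1}} ∘ ⋯ ∘ T_{β_{i-p}}` (here `F i p`, where `F i 0 = id` and
`F i (k+1) = T_{β_{i+k}} ∘ F i k`, indices mod `p`).  Then
`μ i = (μ (i-1)) ∘ T_{β_{i-1}}⁻¹`. -/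
theorem invariant_measure_pushforward
    (p : ℕ) [NeZero p] (β : Fin p → ℝ) (hβ : ∀ i, 1 < β i)
    (Tg : ℝ → ℝ → ℝ) (hTg : ∀ γ x, Tg γ x = γ * x - ⌊γ * x⌋)
    (F : Fin p → ℕ → ℝ → ℝ)
    (hF0 : ∀ i x, F i 0 x = x)
    (hFs : ∀ (i : Fin p) (k : ℕ) (x : ℝ),
      F i (k + 1) x = Tg (β (i + (Fin.ofNat p k))) (F i k x))
    (μ : Fin p → Measure ℝ)
    (hprob : ∀ i, IsProbabilityMeasure (μ i))
    (hsupp : ∀ i, μ i (Set.Ico (0 : ℝ) 1)ᶜ = 0)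
    (hinv : ∀ i, ∀ B : Set ℝ, MeasurableSet B → μ i (F i p ⁻¹' B) = μ i B)
    (hac : ∀ i, μ i ≪ volume)
    (huniq : ∀ i, ∀ ν : Measure ℝ, IsProbabilityMeasure ν →
      ν (Set.Ico (0 : ℝ) 1)ᶜ = 0 →
      (∀ B : Set ℝ, MeasurableSet B → ν (F i p ⁻¹' B) = ν B) →
      ν ≪ volume → ν = μ i) :
    ∀ (i : Fin p) (B : Set ℝ), MeasurableSet B →
      μ i B = μ (i - 1) (Tg (β (i - 1)) ⁻¹' B) := by
  intro i B hB
  set γ := β (i - 1) with hγdef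
  have hγ0 : γ ≠ 0 := by
    have := hβ (i - 1); intro h; rw [← hγdef] at this; rw [h] at this; linarith
  -- Tg γ as fract
  have hTg_eq : ∀ δ : ℝ, Tg δ = fun x => Int.fract (δ * x) := by
    intro δ; funext x; rw [hTg δ x, Int.fract]
  have hmeas : ∀ δ : ℝ, Measurable (Tg δ) := by
    intro δ; rw [hTg_eq δ]
    exact measurable_fract.comp (measurable_const.mul measurable_id)
  -- Tg maps into [0,1)
  have hrange : ∀ δ x, Tg δ x ∈ Set.Ico (0 : ℝ) 1 := by
    intro δ x; rw [hTg_eq δ]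
    exact ⟨Int.fract_nonneg _, Int.fract_lt_one _⟩
  -- preimage of null sets under Tg γ is null
  have hnull : ∀ N : Set ℝ, volume N = 0 → volume (Tg γ ⁻¹' N) = 0 := by
    intro N hN
    rw [hTg_eq γ]
    have : (fun x => Int.fract (γ * x)) ⁻¹' N = (γ * ·) ⁻¹' (Int.fract ⁻¹' N) := rfl
    rw [this, Real.volume_preimage_mul_left hγ0, fract_preimage_null hN, mul_zero]
  -- the candidate measure
  set ν : Measure ℝ := (μ (i - 1)).map (Tg γ) with hν
  have hνapp : ∀ S : Set ℝ, MeasurableSet S → ν S = μ (i - 1) (Tg γ ⁻¹' S) := by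
    intro S hS; rw [hν, Measure.map_apply (hmeas γ) hS]
  -- probability
  haveI hPν : IsProbabilityMeasure ν := by
    have := hprob (i - 1)
    exact Measure.isProbabilityMeasure_map (hmeas γ).aemeasurable
  -- support
  have hsuppν : ν (Set.Ico (0 : ℝ) 1)ᶜ = 0 := by
    rw [hνapp _ measurableSet_Ico.compl]
    have : Tg γ ⁻¹' (Set.Ico (0 : ℝ) 1)ᶜ = ∅ := by
      ext x; simp only [Set.mem_preimage, Set.mem_compl_iff, Set.mem_empty_iff_false,
        iff_false, not_not]
      exact hrange γ x
    rw [this, measure_empty]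
  -- key intertwining : F i k ∘ Tg γ = F (i-1) (k+1)
  have hkey : ∀ (k : ℕ) (x : ℝ), F i k (Tg γ x) = F (i - 1) (k + 1) x := by
    intro k
    induction k with
    | zero =>
      intro x
      rw [hF0, hFs (i - 1) 0 x, hF0]
      simp [hγdef]
    | succ k ih =>
      intro x
      rw [hFs i k (Tg γ x), ih x, hFs (i - 1) (k + 1) x]
      congr 2
      rw [show Fin.ofNat p (k+1) = Fin.ofNat p k + 1 by ext; simp [Fin.val_add, Nat.add_mod]]
      abel
  -- invariance of ν
  have hinvν : ∀ B : Set ℝ, MeasurableSet B → ν (F i p ⁻¹' B) = ν B := by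
    intro S hS
    have hFmeas : MeasurableSet (F i p ⁻¹' S) := by
      have hm : ∀ k : ℕ, Measurable (F i k) := by
        intro k
        induction k with
        | zero => simpa [funext fun x => hF0 i x] using measurable_id'
        | succ k ih =>
          have : F i (k + 1) = Tg (β (i + (Fin.ofNat p k))) ∘ F i k :=
            funext fun x => hFs i k x
          rw [this]; exact (hmeas _).comp ih
      exact (hm p) hS
    rw [hνapp _ hFmeas, hνapp _ hS]
    have hcomm : Tg γ ⁻¹' (F i p ⁻¹' S) = F (i - 1) p ⁻¹' (Tg γ ⁻¹' S) := by
      ext x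
      simp only [Set.mem_preimage]
      rw [hkey p x, hFs (i - 1) p x]
      have hp0 : Fin.ofNat p p = 0 := by
        simp [Fin.ofNat_eq_cast, Fin.natCast_self]
      rw [hp0, add_zero]
    rw [hcomm]
    exact hinv (i - 1) _ ((hmeas γ) hS)
  -- absolute continuity
  have hacν : ν ≪ volume := by
    refine Measure.AbsolutelyContinuous.mk ?_
    intro S hS hS0
    rw [hνapp _ hS]
    exact hac (i - 1) (hnull S hS0)
  -- conclude
  have := huniq i ν hPν hsuppν hinvν hacν
  rw [← this, hνapp B hB]
end

section
/- Let β = (β₀,…,β_{p-1}) be an alternate base and define λ_p on 𝒯_p by λ_p(⋃_i {i}×B_i) = (1/p)Σ_i λ(B_i), where λ is Lebesgue measure. If A ∈ 𝒯_p satisfies T_β^{-1}(A) = A, then λ_p(A) ∈ {0,1}. (Assume: any Borel set B ⊆ [0,1) invariant under a composition T_{β_{n-1}} ∘ ⋯ ∘ T_{β₀} of greedy transformations has Lebesgue measure 0 or 1, and each T_γ is non-singular with respect to Lebesgue measure.) -/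
open MeasureTheory

/-- if `A = ⋃ᵢ {i}×Bᵢ ∈ 𝒯_p` is invariant under the greedy
alternate-base transformation `T_β`, then `λ_p(A) = (1/p) Σᵢ λ(Bᵢ) ∈ {0,1}`.
We assume (as in the paper): each Borel subset of `[0,1)` invariant under the
composition `T_{β_{i-1}} ∘ ⋯ ∘ T_{β_{i-p}}` (denoted `F i p`) has Lebesgue
measure `0` or `1`, and each greedy transformation is non-singular with respect
to Lebesgue measure. -/
theorem invariant_set_lambda_p_zero_or_one
    (p : ℕ) [NeZero p] (β : Fin p → ℝ) (hβ : ∀ i, 1 < β i)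
    (Tg : ℝ → ℝ → ℝ) (hTg : ∀ γ x, Tg γ x = γ * x - ⌊γ * x⌋)
    (F : Fin p → ℕ → ℝ → ℝ)
    (hF0 : ∀ i x, F i 0 x = x)
    (hFs : ∀ (i : Fin p) (k : ℕ) (x : ℝ),
      F i (k + 1) x = Tg (β (i + Fin.ofNat p k)) (F i k x))
    (hcomp01 : ∀ (i : Fin p) (B : Set ℝ), MeasurableSet B → B ⊆ Set.Ico 0 1 →
      F i p ⁻¹' B ∩ Set.Ico 0 1 = B → volume B = 0 ∨ volume B = 1)
    (hns : ∀ (i : Fin p) (B : Set ℝ), MeasurableSet B → B ⊆ Set.Ico 0 1 →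
      (volume B = 0 ↔ volume (Tg (β i) ⁻¹' B ∩ Set.Ico 0 1) = 0))
    (T : Fin p × ℝ → Fin p × ℝ)
    (hT : ∀ (i : Fin p) (x : ℝ), T (i, x) = (i + 1, Tg (β i) x))
    (B : Fin p → Set ℝ)
    (hBmeas : ∀ i, MeasurableSet (B i))
    (hBsub : ∀ i, B i ⊆ Set.Ico 0 1)
    (hinv : T ⁻¹' (⋃ i : Fin p, {i} ×ˢ B i) ∩
        (Set.univ ×ˢ Set.Ico (0 : ℝ) 1) = ⋃ i : Fin p, {i} ×ˢ B i) :
    (p : ENNReal)⁻¹ * ∑ i : Fin p, volume (B i) = 0 ∨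
      (p : ENNReal)⁻¹ * ∑ i : Fin p, volume (B i) = 1 := by
  -- fractional part lands in [0,1)
  have hfr : ∀ γ x : ℝ, Tg γ x ∈ Set.Ico (0:ℝ) 1 := by
    intro γ x
    rw [hTg]
    constructor
    · have := Int.floor_le (γ * x); linarith
    · have := Int.lt_floor_add_one (γ * x); linarith
  -- pointwise invariance of the slices
  have hstep : ∀ i : Fin p, Tg (β i) ⁻¹' B (i+1) ∩ Set.Ico 0 1 = B i := by
    intro i
    ext x
    have h := Set.ext_iff.1 hinv (i, x)
    simp only [Set.mem_inter_iff, Set.mem_preimage, hT, Set.mem_iUnion,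
      Set.mem_prod, Set.mem_singleton_iff, Set.mem_univ, true_and,
      Prod.mk.injEq, exists_eq_left] at h ⊢
    -- h : (x ∈ B (i+1) pre) ∧ x ∈ Ico ↔ x ∈ B i  (roughly)
    constructor
    · rintro ⟨hb, hx⟩
      have := h.1 ⟨⟨i + 1, rfl, hb⟩, hx⟩
      obtain ⟨j, hj, hbj⟩ := this
      subst hj; exact hbj
    · intro hb
      have := h.2 ⟨i, rfl, hb⟩
      obtain ⟨⟨j, hj, hbj⟩, hx⟩ := this
      have : j = i + 1 := by exact hj.symm
      subst this
      exact ⟨hbj, hx⟩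
  -- iterate: membership transported along F
  have hiter : ∀ (i : Fin p) (k : ℕ) (x : ℝ), x ∈ Set.Ico (0:ℝ) 1 →
      (x ∈ B i ↔ F i k x ∈ B (i + Fin.ofNat p k)) := by
    intro i k
    induction k with
    | zero =>
      intro x hx
      simp [hF0]
    | succ k ih =>
      intro x hx
      have hFk : F i k x ∈ Set.Ico (0:ℝ) 1 := by
        cases k with
        | zero => rw [hF0]; exact hx
        | succ m => rw [hFs]; exact hfr _ _
      have h1 : F i k x ∈ B (i + Fin.ofNat p k) ↔
          Tg (β (i + Fin.ofNat p k)) (F i k x) ∈ B (i + Fin.ofNat p k + 1) := by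
        constructor
        · intro hb
          have := (hstep (i + Fin.ofNat p k)).symm ▸ hb
          exact this.1
        · intro hb
          have : F i k x ∈ Tg (β (i + Fin.ofNat p k)) ⁻¹' B (i + Fin.ofNat p k + 1)
              ∩ Set.Ico 0 1 := ⟨hb, hFk⟩
          rw [hstep] at this; exact this
      rw [ih x hx, h1, ← hFs]
      have hcast : Fin.ofNat p (k + 1) = Fin.ofNat p k + 1 := Fin.ext (by simp [Fin.val_add, Nat.add_mod])
      rw [hcast, ← add_assoc]
  -- each slice is invariant under the p-fold composition
  have hinvB : ∀ i : Fin p, F i p ⁻¹' B i ∩ Set.Ico 0 1 = B i := by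
    intro i
    ext x
    constructor
    · rintro ⟨hb, hx⟩
      have := (hiter i p x hx).2
      rw [Fin.ofNat_self, add_zero] at this
      exact this hb
    · intro hb
      have hx := hBsub i hb
      refine ⟨?_, hx⟩
      have := (hiter i p x hx).1 hb
      rwa [Fin.ofNat_self, add_zero] at this
  -- dichotomy for each slice
  have h01 : ∀ i : Fin p, volume (B i) = 0 ∨ volume (B i) = 1 := fun i =>
    hcomp01 i (B i) (hBmeas i) (hBsub i) (hinvB i)
  -- zero-ness propagates around the cycle
  have heq : ∀ i : Fin p, (volume (B (i+1)) = 0 ↔ volume (B i) = 0) := by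
    intro i
    have := hns i (B (i+1)) (hBmeas _) (hBsub _)
    rwa [hstep i] at this
  have hall : ∀ k : ℕ, (volume (B (Fin.ofNat p k)) = 0 ↔ volume (B 0) = 0) := by
    intro k
    induction k with
    | zero => simp
    | succ k ih =>
      have hcast : Fin.ofNat p (k + 1) = Fin.ofNat p k + 1 := Fin.ext (by simp [Fin.val_add, Nat.add_mod])
      rw [hcast, heq (Fin.ofNat p k), ih]
  have hall' : ∀ i : Fin p, (volume (B i) = 0 ↔ volume (B 0) = 0) := by
    intro i
    have := hall i.val
    rwa [Fin.ofNat_val_eq_self] at this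
  rcases h01 0 with h0 | h0
  · left
    have : ∀ i : Fin p, volume (B i) = 0 := fun i => (hall' i).2 h0
    simp [this]
  · right
    have hone : ∀ i : Fin p, volume (B i) = 1 := by
      intro i
      rcases h01 i with h | h
      · exact absurd ((hall' i).1 h ▸ h0) (by simp [(hall' i).1 h])
      · exact h
    have hp0 : (p : ENNReal) ≠ 0 := by
      exact_mod_cast Nat.cast_ne_zero.2 (NeZero.ne p)
    simp only [hone, Finset.sum_const, Finset.card_univ, Fintype.card_fin,
      nsmul_eq_mul, mul_one]
    exact ENNReal.inv_mul_cancel hp0 (ENNReal.natCast_ne_top p)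
end

section
/- Let β = (β₀,…,β_{p-1}) be an alternate base. The map φ_β(i,x) = (i, x_{β^{(i)}} − x) from ⋃_{i=0}^{p-1}({i}×[0,x_{β^{(i)}})) to ⋃_{i=0}^{p-1}({i}×(0,x_{β^{(i)}}]) is a bijection satisfying φ_β ∘ T_β = L_β ∘ φ_β, where T_β is the extended greedy β-transformation and L_β the lazy β-transformation. -/
private lemma mem_union_prod_iff {p : ℕ} (S : Fin p → Set ℝ) (i : Fin p) (x : ℝ) :
    (i, x) ∈ (⋃ j : Fin p, ({j} : Set (Fin p)) ×ˢ S j) ↔ x ∈ S i := by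
  simp only [Set.mem_iUnion, Set.mem_prod, Set.mem_singleton_iff]
  constructor
  · rintro ⟨j, rfl, h⟩; exact h
  · intro h; exact ⟨i, rfl, h⟩

/-- the map `φ_β(i,x) = (i, x_{β^{(i)}} − x)` is a bijection
from `⋃ᵢ {i}×[0,x_{β^{(i)}})` onto `⋃ᵢ {i}×(0,x_{β^{(i)}}]` conjugating the
extended greedy transformation `T_β` to the lazy transformation `L_β`. -/
theorem greedy_lazy_conjugacy
    (p : ℕ) [NeZero p] (β : Fin p → ℝ) (hβ : ∀ i, 1 < β i)
    (xB : Fin p → ℝ)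
    (hxB1 : ∀ i, 1 ≤ xB i)
    (hxBrec : ∀ i : Fin p, xB i = (xB (i + 1) + (⌈β i⌉ : ℝ) - 1) / β i)
    (T : Fin p × ℝ → Fin p × ℝ)
    (hT : ∀ (i : Fin p) (x : ℝ), T (i, x) =
      (i + 1, if x < 1 then β i * x - ⌊β i * x⌋ else β i * x - ((⌈β i⌉ : ℝ) - 1)))
    (L : Fin p × ℝ → Fin p × ℝ)
    (hL : ∀ (i : Fin p) (x : ℝ), L (i, x) =
      (i + 1, if x ≤ xB i - 1 then β i * x
        else β i * x - (⌈β i * x - xB (i + 1)⌉ : ℝ)))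
    (φ : Fin p × ℝ → Fin p × ℝ)
    (hφ : ∀ (i : Fin p) (x : ℝ), φ (i, x) = (i, xB i - x)) :
    Set.BijOn φ (⋃ i : Fin p, {i} ×ˢ Set.Ico 0 (xB i))
        (⋃ i : Fin p, {i} ×ˢ Set.Ioc 0 (xB i)) ∧
      ∀ (i : Fin p) (x : ℝ), x ∈ Set.Ico 0 (xB i) →
        φ (T (i, x)) = L (φ (i, x)) := by
  have hbxB : ∀ i : Fin p, β i * xB i = xB (i + 1) + (⌈β i⌉ : ℝ) - 1 := by
    intro i
    have h0 : β i ≠ 0 := by have := hβ i; linarith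
    rw [hxBrec i]; field_simp
  constructor
  · refine ⟨?_, ?_, ?_⟩
    · rintro ⟨i, x⟩ hx
      rw [mem_union_prod_iff] at hx
      rw [hφ, mem_union_prod_iff]
      exact ⟨by linarith [hx.2], by linarith [hx.1]⟩
    · rintro ⟨i, x⟩ hx ⟨j, y⟩ hy h
      rw [hφ, hφ] at h
      obtain ⟨h1, h2⟩ := Prod.mk.injEq .. ▸ h
      subst h1
      have : x = y := by linarith [h2]
      rw [this]
    · rintro ⟨i, y⟩ hy
      rw [mem_union_prod_iff] at hy
      refine ⟨(i, xB i - y), ?_, ?_⟩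
      · rw [mem_union_prod_iff]
        exact ⟨by linarith [hy.2], by linarith [hy.1]⟩
      · rw [hφ]; simp
  · intro i x hx
    rw [hT, hφ, hφ, hL]
    have key : ¬ (xB i - x ≤ xB i - 1) ↔ x < 1 := by constructor <;> intro h <;> linarith
    by_cases hx1 : x < 1
    · rw [if_pos hx1, if_neg (key.mpr hx1)]
      have hc : β i * (xB i - x) - xB (i + 1) = (-(β i * x)) + ((⌈β i⌉ - 1 : ℤ) : ℝ) := by
        push_cast; rw [mul_sub, hbxB i]; ring
      rw [hc, Int.ceil_add_intCast, Int.ceil_neg]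
      refine Prod.ext rfl ?_
      simp only []
      push_cast
      rw [mul_sub]
      linarith [hbxB i]
    · rw [if_neg hx1, if_pos (by push_neg at hx1; linarith)]
      refine Prod.ext rfl ?_
      simp only []
      rw [mul_sub]
      linarith [hbxB i]
end

section
/- Let β = (β₀,…,β_{p-1}) be an alternate base. For each i ∈ {0,…,p−1}, L_β maps {i}×(x_{β^{(i)}}−1, x_{β^{(i)}}] into {(i+1) mod p}×(x_{β^{(i+1)}}−1, x_{β^{(i+1)}}], i.e., the lazy β-transformation can be restricted to ⋃_i ({i}×(x_{β^{(i)}}−1, x_{β^{(i)}}]). -/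
/-- the lazy transformation `L_β` maps
`{i}×(x_{β^{(i)}}−1, x_{β^{(i)}}]` into
`{i+1}×(x_{β^{(i+1)}}−1, x_{β^{(i+1)}}]`, so it can be restricted to
`⋃ᵢ {i}×(x_{β^{(i)}}−1, x_{β^{(i)}}]`. -/
theorem lazy_maps_restricted_interval
    (p : ℕ) [NeZero p] (β : Fin p → ℝ) (hβ : ∀ i, 1 < β i)
    (xB : Fin p → ℝ)
    (hxB1 : ∀ i, 1 ≤ xB i)
    (hxBrec : ∀ i : Fin p, xB i = (xB (i + 1) + (⌈β i⌉ : ℝ) - 1) / β i)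
    (L : Fin p × ℝ → Fin p × ℝ)
    (hL : ∀ (i : Fin p) (x : ℝ), L (i, x) =
      (i + 1, if x ≤ xB i - 1 then β i * x
        else β i * x - (⌈β i * x - xB (i + 1)⌉ : ℝ))) :
    ∀ (i : Fin p) (x : ℝ), x ∈ Set.Ioc (xB i - 1) (xB i) →
      (L (i, x)).1 = i + 1 ∧ (L (i, x)).2 ∈ Set.Ioc (xB (i + 1) - 1) (xB (i + 1)) := by
  intro i x hx
  rw [hL]
  refine ⟨rfl, ?_⟩
  dsimp only
  rw [if_neg (not_le.mpr hx.1)]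
  have h1 := Int.le_ceil (β i * x - xB (i + 1))
  have h2 := Int.ceil_lt_add_one (β i * x - xB (i + 1))
  exact ⟨by linarith, by linarith⟩
end

section
/- Let β = (β₀,…,β_{p-1}) be an alternate base and define Δ_β = {Σ_{i=0}^{p-1} β_{p-1}⋯β_{i+1} c_i : c_i ∈ {0,…,⌈β_i⌉−1}}. Write Δ_β = {d₀ < d₁ < ⋯ < d_m}. Then Δ_β is an allowable digit set for β_{p-1}⋯β₀, i.e., d₀ = 0 and max_{0≤k≤m−1}(d_{k+1} − d_k) ≤ d_m/(β_{p-1}⋯β₀ − 1). -/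
open Finset

private lemma tele_aux (g : ℕ → ℝ) :
    ∀ n a : ℕ, ∑ i ∈ Ico a (a + n), (∏ j ∈ Ico (i+1) (a+n), g j) * (g i - 1)
      = (∏ j ∈ Ico a (a + n), g j) - 1 := by
  intro n
  induction n with
  | zero => intro a; simp
  | succ n ih =>
    intro a
    have hab : a < a + (n+1) := by omega
    have h1 : a + (n+1) = (a+1) + n := by omega
    rw [Finset.sum_eq_sum_Ico_succ_bot hab, Finset.prod_eq_prod_Ico_succ_bot hab]
    rw [h1, ih (a+1)]
    ring

private lemma dm_ge (g : ℕ → ℝ) (hg : ∀ i, 1 < g i) (a b : ℕ) (hab : a ≤ b) :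
    (∏ j ∈ Ico a b, g j) - 1 ≤
      ∑ i ∈ Ico a b, (∏ j ∈ Ico (i+1) b, g j) * ((⌈g i⌉ : ℝ) - 1) := by
  obtain ⟨n, rfl⟩ := Nat.exists_eq_add_of_le hab
  rw [← tele_aux g n a]
  apply Finset.sum_le_sum
  intro i _
  have hP : (0:ℝ) ≤ ∏ j ∈ Ico (i+1) (a+n), g j :=
    Finset.prod_nonneg fun j _ => le_of_lt (lt_trans one_pos (hg j))
  have h2 : g i - 1 ≤ (⌈g i⌉ : ℝ) - 1 := by
    have := Int.le_ceil (g i); linarith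
  exact mul_le_mul_of_nonneg_left h2 hP

private lemma ceil_two (g : ℕ → ℝ) (hg : ∀ i, 1 < g i) (i : ℕ) : (2:ℤ) ≤ ⌈g i⌉ := by
  have : (1:ℤ) < ⌈g i⌉ := by
    rw [Int.lt_ceil]; exact_mod_cast hg i
  omega

private lemma cover_aux (p : ℕ) (g : ℕ → ℝ) (hg : ∀ i, 1 < g i) :
    ∀ n k : ℕ, k + n = p → ∀ x : ℝ, 0 ≤ x →
      x < ∑ i ∈ Ico k p, (∏ j ∈ Ico (i+1) p, g j) * ((⌈g i⌉ : ℝ) - 1) →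
      ∃ c : ℕ → ℕ, (∀ i, (c i : ℝ) ≤ (⌈g i⌉ : ℝ) - 1) ∧
        x < ∑ i ∈ Ico k p, (∏ j ∈ Ico (i+1) p, g j) * c i ∧
        ∑ i ∈ Ico k p, (∏ j ∈ Ico (i+1) p, g j) * c i ≤ x + 1 := by
  intro n
  induction n with
  | zero =>
    intro k hk x hx hlt
    rw [show k = p by omega] at hlt
    simp at hlt
    linarith
  | succ n ih =>
    intro k hk x hx hlt
    have hkp : k < p := by omega
    set P : ℝ := ∏ j ∈ Ico (k+1) p, g j with hP
    set dm' : ℝ := ∑ i ∈ Ico (k+1) p, (∏ j ∈ Ico (i+1) p, g j) * ((⌈g i⌉ : ℝ) - 1)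
      with hdm'
    have hPpos : 0 < P := Finset.prod_pos fun j _ => lt_trans one_pos (hg j)
    have hsplitmax : ∑ i ∈ Ico k p, (∏ j ∈ Ico (i+1) p, g j) * ((⌈g i⌉ : ℝ) - 1)
        = P * ((⌈g k⌉ : ℝ) - 1) + dm' := by
      rw [Finset.sum_eq_sum_Ico_succ_bot hkp]
    set mk : ℕ := (⌈g k⌉ - 1).toNat with hmk
    have hmkR : (mk : ℝ) = (⌈g k⌉ : ℝ) - 1 := by
      have h2 := ceil_two g hg k
      have : ((⌈g k⌉ - 1).toNat : ℤ) = ⌈g k⌉ - 1 := Int.toNat_of_nonneg (by omega)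
      push_cast [hmk]
      exact_mod_cast congrArg (Int.cast : ℤ → ℝ) this
    set q : ℕ := min mk ⌊x / P⌋₊ with hq
    have hqle : (q : ℝ) * P ≤ x := by
      have h1 : (q : ℝ) ≤ ⌊x / P⌋₊ := by exact_mod_cast Nat.cast_le.mpr (min_le_right _ _)
      have h2 : (⌊x / P⌋₊ : ℝ) ≤ x / P := Nat.floor_le (by positivity)
      calc (q:ℝ) * P ≤ (x / P) * P := by nlinarith
        _ = x := by field_simp
    by_cases hcase : x - P * q < dm'
    · -- use IH on the tail
      obtain ⟨c, hc, hc1, hc2⟩ := ih (k+1) (by omega) (x - P * q) (by nlinarith) hcase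
      refine ⟨Function.update c k q, ?_, ?_, ?_⟩
      · intro i
        rcases eq_or_ne i k with rfl | hne
        · rw [Function.update_self, ← hmkR]
          exact_mod_cast min_le_left _ _
        · rw [Function.update_of_ne hne]; exact hc i
      all_goals {
        have hsum : ∑ i ∈ Ico k p, (∏ j ∈ Ico (i+1) p, g j) * (Function.update c k q i)
            = P * q + ∑ i ∈ Ico (k+1) p, (∏ j ∈ Ico (i+1) p, g j) * c i := by
          rw [Finset.sum_eq_sum_Ico_succ_bot hkp, Function.update_self]
          congr 1
          apply Finset.sum_congr rfl
          intro i hi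
          rw [Function.update_of_ne (by simp at hi; omega)]
        rw [hsum]; linarith }
    · -- increment digit at k, zero tail
      push_neg at hcase
      have hqlt : q < mk := by
        by_contra hge
        push_neg at hge
        have : q = mk := le_antisymm (min_le_left _ _) hge
        rw [this] at hcase
        rw [hsplitmax] at hlt
        rw [hmkR] at hcase
        nlinarith
      have hqfl : q = ⌊x / P⌋₊ := by
        rcases min_cases mk ⌊x / P⌋₊ with ⟨h1, h2⟩ | ⟨h1, h2⟩
        · omega
        · exact h1
      have hxlt : x < P * (q + 1) := by
        have : x / P < ⌊x / P⌋₊ + 1 := Nat.lt_floor_add_one _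
        rw [← hqfl] at this
        calc x = (x / P) * P := by field_simp
          _ < ((q:ℝ) + 1) * P := by nlinarith
          _ = P * (q + 1) := by ring
      have hPle : P - 1 ≤ dm' := dm_ge g hg (k+1) p (by omega)
      refine ⟨Function.update (fun _ => 0) k (q+1), ?_, ?_, ?_⟩
      · intro i
        rcases eq_or_ne i k with rfl | hne
        · rw [Function.update_self, ← hmkR]
          exact_mod_cast Nat.cast_le.mpr hqlt
        · rw [Function.update_of_ne hne]
          have := ceil_two g hg i
          push_cast
          have : (2:ℝ) ≤ (⌈g i⌉ : ℝ) := by exact_mod_cast this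
          linarith
      all_goals {
        have hsum : ∑ i ∈ Ico k p, (∏ j ∈ Ico (i+1) p, g j) *
              (Function.update (fun _ => 0) k (q+1) i : ℕ)
            = P * (q + 1) := by
          rw [Finset.sum_eq_sum_Ico_succ_bot hkp, Function.update_self]
          have : ∑ i ∈ Ico (k+1) p, (∏ j ∈ Ico (i+1) p, g j) *
              ((Function.update (fun _ => 0) k (q+1) i : ℕ) : ℝ) = 0 := by
            apply Finset.sum_eq_zero
            intro i hi
            rw [Function.update_of_ne (by simp at hi; omega)]
            simp
          rw [this]
          push_cast
          ring
        rw [hsum]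
        try exact hxlt
        try nlinarith }
section
variable (p : ℕ) [NeZero p] (β : Fin p → ℝ)

set_option linter.unusedSectionVars false

private noncomputable def gOf : ℕ → ℝ := fun i => if h : i < p then β ⟨i, h⟩ else 2

private lemma gOf_lt (hβ : ∀ i, 1 < β i) : ∀ i, 1 < gOf p β i := by
  intro i; unfold gOf; split
  · exact hβ _
  · norm_num

private lemma prod_Ioi_eq (i : Fin p) :
    ∏ j ∈ Ioi i, β j = ∏ j ∈ Ico (i.val + 1) p, gOf p β j := by
  have h1 : ∏ j ∈ Ioi i, β j = ∏ j ∈ (Ioi i).map Fin.valEmbedding, gOf p β j := by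
    rw [Finset.prod_map]
    apply Finset.prod_congr rfl
    intro j _
    simp [gOf, j.isLt]
  rw [h1, Fin.map_valEmbedding_Ioi]
  apply Finset.prod_congr _ (fun _ _ => rfl)
  ext a
  simp only [mem_Ioc, mem_Ioo, mem_Ico]
  have := p.pos_of_neZero
  omega

private lemma sum_fin_eq (h : ℕ → ℝ) :
    ∑ i : Fin p, (∏ j ∈ Ioi i, β j) * h i.val
      = ∑ i ∈ Ico 0 p, (∏ j ∈ Ico (i + 1) p, gOf p β j) * h i := by
  rw [← Finset.range_eq_Ico, ← Fin.sum_univ_eq_sum_range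
    (fun i => (∏ j ∈ Ico (i + 1) p, gOf p β j) * h i) p]
  exact Finset.sum_congr rfl fun i _ => by rw [prod_Ioi_eq]

private lemma prod_fin_eq : ∏ i : Fin p, β i = ∏ j ∈ range p, gOf p β j := by
  rw [← Fin.prod_univ_eq_prod_range (gOf p β) p]
  exact Finset.prod_congr rfl fun i _ => by simp [gOf, i.isLt]
end

/-- the digit set
`Δ_β = {Σᵢ β_{p-1}⋯β_{i+1} cᵢ : 0 ≤ cᵢ ≤ ⌈βᵢ⌉−1}` is an allowable digit set
for the base `β_{p-1}⋯β₀`: its least element is `0`, its greatest element is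
`d_m = Σᵢ β_{p-1}⋯β_{i+1}(⌈βᵢ⌉−1)`, and every element `d < d_m` has a larger
element of `Δ_β` within distance `d_m/(β_{p-1}⋯β₀ − 1)` (so all consecutive
gaps are at most `d_m/(β_{p-1}⋯β₀ − 1)`). -/
theorem digitSet_allowable
    (p : ℕ) [NeZero p] (β : Fin p → ℝ) (hβ : ∀ i, 1 < β i) :
    letI Δ : Set ℝ := {y | ∃ c : Fin p → ℕ,
      (∀ i, (c i : ℝ) ≤ (⌈β i⌉ : ℝ) - 1) ∧
      y = ∑ i : Fin p, (∏ j ∈ Finset.Ioi i, β j) * c i}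
    letI dm : ℝ := ∑ i : Fin p, (∏ j ∈ Finset.Ioi i, β j) * ((⌈β i⌉ : ℝ) - 1)
    (0 : ℝ) ∈ Δ ∧ dm ∈ Δ ∧
      (∀ d ∈ Δ, 0 ≤ d ∧ d ≤ dm) ∧
      ∀ d ∈ Δ, d < dm → ∃ d' ∈ Δ, d < d' ∧
        d' - d ≤ dm / ((∏ i : Fin p, β i) - 1) := by
  set Δ : Set ℝ := {y | ∃ c : Fin p → ℕ,
      (∀ i, (c i : ℝ) ≤ (⌈β i⌉ : ℝ) - 1) ∧
      y = ∑ i : Fin p, (∏ j ∈ Finset.Ioi i, β j) * c i} with hΔdef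
  set dm : ℝ := ∑ i : Fin p, (∏ j ∈ Finset.Ioi i, β j) * ((⌈β i⌉ : ℝ) - 1) with hdmdef
  have hceil : ∀ i : Fin p, (2:ℝ) ≤ (⌈β i⌉ : ℝ) := by
    intro i
    have : (1:ℤ) < ⌈β i⌉ := by rw [Int.lt_ceil]; exact_mod_cast hβ i
    exact_mod_cast this
  have hPnn : ∀ i : Fin p, (0:ℝ) ≤ ∏ j ∈ Finset.Ioi i, β j := fun i =>
    Finset.prod_nonneg fun j _ => le_of_lt (lt_trans one_pos (hβ j))
  have hg : ∀ i, 1 < gOf p β i := gOf_lt p β hβ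
  -- 0 ∈ Δ
  have h0 : (0:ℝ) ∈ Δ := by
    refine ⟨fun _ => 0, fun i => by simpa using by linarith [hceil i], by simp⟩
  -- dm ∈ Δ
  have hdmmem : dm ∈ Δ := by
    refine ⟨fun i => (⌈β i⌉ - 1).toNat, fun i => ?_, ?_⟩
    · have h2 : (1:ℤ) < ⌈β i⌉ := by rw [Int.lt_ceil]; exact_mod_cast hβ i
      have : ((⌈β i⌉ - 1).toNat : ℤ) = ⌈β i⌉ - 1 := Int.toNat_of_nonneg (by omega)
      have := congrArg (Int.cast : ℤ → ℝ) this
      push_cast at this ⊢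
      linarith
    · apply Finset.sum_congr rfl
      intro i _
      congr 1
      have h2 : (1:ℤ) < ⌈β i⌉ := by rw [Int.lt_ceil]; exact_mod_cast hβ i
      have : ((⌈β i⌉ - 1).toNat : ℤ) = ⌈β i⌉ - 1 := Int.toNat_of_nonneg (by omega)
      have := congrArg (Int.cast : ℤ → ℝ) this
      push_cast at this ⊢
      linarith
  -- bounds
  have hbd : ∀ d ∈ Δ, 0 ≤ d ∧ d ≤ dm := by
    rintro d ⟨c, hc, rfl⟩
    constructor
    · exact Finset.sum_nonneg fun i _ => mul_nonneg (hPnn i) (Nat.cast_nonneg _)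
    · exact Finset.sum_le_sum fun i _ => mul_le_mul_of_nonneg_left (hc i) (hPnn i)
  refine ⟨h0, hdmmem, hbd, ?_⟩
  -- the gap condition
  rintro d hd hdlt
  have hd0 : 0 ≤ d := (hbd d hd).1
  have hdm_eq : dm = ∑ i ∈ Finset.Ico 0 p,
      (∏ j ∈ Finset.Ico (i+1) p, gOf p β j) * ((⌈gOf p β i⌉ : ℝ) - 1) := by
    rw [← sum_fin_eq]
    apply Finset.sum_congr rfl
    intro i _
    congr 2
    simp [gOf, i.isLt]
  obtain ⟨c, hc, hc1, hc2⟩ := cover_aux p (gOf p β) hg p 0 (by omega) d hd0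
    (hdm_eq ▸ hdlt)
  set d' : ℝ := ∑ i : Fin p, (∏ j ∈ Finset.Ioi i, β j) * (c i.val : ℝ) with hd'
  have hd'eq : d' = ∑ i ∈ Finset.Ico 0 p,
      (∏ j ∈ Finset.Ico (i+1) p, gOf p β j) * (c i : ℝ) :=
    sum_fin_eq p β (fun m => (c m : ℝ))
  have hd'mem : d' ∈ Δ := by
    refine ⟨fun i => c i.val, fun i => ?_, rfl⟩
    have := hc i.val
    simpa [gOf, i.isLt] using this
  refine ⟨d', hd'mem, by rw [hd'eq]; exact hc1, ?_⟩
  -- d' - d ≤ 1 ≤ dm / (B - 1)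
  have hB : (1:ℝ) < ∏ i : Fin p, β i := by
    have := Finset.prod_lt_prod_of_nonempty (f := fun _ : Fin p => (1:ℝ))
      (g := β) (s := Finset.univ) (fun i _ => one_pos) (fun i _ => hβ i)
      Finset.univ_nonempty
    simpa using this
  have hBdm : (∏ i : Fin p, β i) - 1 ≤ dm := by
    rw [hdm_eq, prod_fin_eq, Finset.range_eq_Ico]
    exact dm_ge (gOf p β) hg 0 p (by omega)
  have h1le : (1:ℝ) ≤ dm / ((∏ i : Fin p, β i) - 1) := by
    rw [le_div_iff₀ (by linarith)]
    linarith
  have : d' ≤ d + 1 := by rw [hd'eq]; exact hc2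
  linarith
end

section
/- Let β = (β₀,…,β_{p-1}) be an alternate base and f_β : ∏_{i=0}^{p-1} {0,…,⌈β_i⌉−1} → ℝ, (c₀,…,c_{p-1}) ↦ Σ_{i=0}^{p-1} β_{p-1}⋯β_{i+1} c_i. Then f_β is non-decreasing with respect to the lexicographic order if and only if for all j ∈ {1,…,p−2}, Σ_{i=j}^{p-1} β_{p-1}⋯β_{i+1}(⌈β_i⌉−1) ≤ β_{p-1}⋯β_j. -/
private lemma fin_sum_split (p : ℕ) (d : Fin p) (f : Fin p → ℝ) :
    ∑ i : Fin p, f i = ∑ i ∈ Finset.Iio d, f i + f d + ∑ i ∈ Finset.Ioi d, f i := by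
  have h1 : (Finset.univ : Finset (Fin p)) = Finset.Iio d ∪ Finset.Ici d := by
    ext i
    simp only [Finset.mem_univ, Finset.mem_union, Finset.mem_Iio, Finset.mem_Ici, true_iff]
    exact lt_or_ge i d
  have h2 : Disjoint (Finset.Iio d) (Finset.Ici d) := by
    rw [Finset.disjoint_left]
    intro a ha hb
    simp only [Finset.mem_Iio] at ha
    simp only [Finset.mem_Ici] at hb
    exact absurd hb (not_le.mpr ha)
  rw [h1, Finset.sum_union h2, Finset.Ici_eq_cons_Ioi, Finset.sum_cons]
  ring

/-- the map `f_β(c) = Σᵢ β_{p-1}⋯β_{i+1} cᵢ` on admissible digit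
tuples is non-decreasing for the lexicographic order if and only if for all
`j ∈ {1,…,p−2}`, `Σ_{i≥j} β_{p-1}⋯β_{i+1}(⌈βᵢ⌉−1) ≤ β_{p-1}⋯β_j`. -/
theorem f_beta_lex_monotone_iff
    (p : ℕ) (β : Fin p → ℝ) (hβ : ∀ i, 1 < β i) :
    (∀ c c' : Fin p → ℕ,
        (∀ i, (c i : ℝ) ≤ (⌈β i⌉ : ℝ) - 1) →
        (∀ i, (c' i : ℝ) ≤ (⌈β i⌉ : ℝ) - 1) →
        (∃ j : Fin p, (∀ k : Fin p, k < j → c k = c' k) ∧ c j < c' j) →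
        ∑ i : Fin p, (∏ j ∈ Finset.Ioi i, β j) * c i ≤
          ∑ i : Fin p, (∏ j ∈ Finset.Ioi i, β j) * c' i) ↔
      (∀ j : Fin p, 1 ≤ (j : ℕ) → (j : ℕ) ≤ p - 2 →
        ∑ i ∈ Finset.Ici j, (∏ k ∈ Finset.Ioi i, β k) * ((⌈β i⌉ : ℝ) - 1) ≤
          ∏ k ∈ Finset.Ici j, β k) := by
  have hβ0 : ∀ i, (0:ℝ) < β i := fun i => lt_trans one_pos (hβ i)
  set w : Fin p → ℝ := fun i => ∏ j ∈ Finset.Ioi i, β j with hw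
  have hwpos : ∀ i, 0 < w i := fun i => Finset.prod_pos (fun j _ => hβ0 j)
  have hceil2 : ∀ i : Fin p, (2:ℤ) ≤ ⌈β i⌉ := by
    intro i
    have := Int.lt_ceil.mpr (show ((1:ℤ):ℝ) < β i by exact_mod_cast hβ i)
    omega
  have hceil1 : ∀ i : Fin p, (1:ℝ) ≤ (⌈β i⌉ : ℝ) - 1 := by
    intro i
    have := hceil2 i
    have : ((2:ℤ):ℝ) ≤ (⌈β i⌉:ℝ) := by exact_mod_cast this
    push_cast at this
    linarith
  have hcast : ∀ i : Fin p, ((⌈β i⌉.toNat - 1 : ℕ) : ℝ) = (⌈β i⌉ : ℝ) - 1 := by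
    intro i
    have h2 := hceil2 i
    have ht : (⌈β i⌉.toNat : ℤ) = ⌈β i⌉ := Int.toNat_of_nonneg (by omega)
    have h1 : 1 ≤ ⌈β i⌉.toNat := by omega
    have ht' : ((⌈β i⌉.toNat : ℕ) : ℝ) = ((⌈β i⌉ : ℤ) : ℝ) := by exact_mod_cast ht
    rw [Nat.cast_sub h1, ht', Nat.cast_one]
  constructor
  · -- monotone → condition
    intro h j hj1 hj2
    have hjp : (j : ℕ) < p := j.isLt
    have hp3 : 3 ≤ p := by omega
    set d : Fin p := ⟨(j : ℕ) - 1, by omega⟩ with hd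
    have hIoi : Finset.Ioi d = Finset.Ici j := by
      ext i
      simp only [Finset.mem_Ioi, Finset.mem_Ici, Fin.lt_def, Fin.le_def, hd]
      omega
    set c : Fin p → ℕ := fun i => if d < i then ⌈β i⌉.toNat - 1 else 0 with hc
    set c' : Fin p → ℕ := fun i => if i = d then 1 else 0 with hc'
    have hadm : ∀ i, (c i : ℝ) ≤ (⌈β i⌉ : ℝ) - 1 := by
      intro i
      simp only [hc]
      split
      · rw [hcast i]
      · simpa using le_trans zero_le_one (hceil1 i)
    have hadm' : ∀ i, (c' i : ℝ) ≤ (⌈β i⌉ : ℝ) - 1 := by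
      intro i
      simp only [hc']
      split
      · simpa using hceil1 i
      · simpa using le_trans zero_le_one (hceil1 i)
    have hlex : ∃ j : Fin p, (∀ k : Fin p, k < j → c k = c' k) ∧ c j < c' j := by
      refine ⟨d, fun k hk => ?_, ?_⟩
      · simp only [hc, hc', if_neg (asymm hk), if_neg (ne_of_lt hk)]
      · simp [hc, hc']
    have key := h c c' hadm hadm' hlex
    have hsc : ∑ i : Fin p, w i * c i =
        ∑ i ∈ Finset.Ici j, w i * ((⌈β i⌉ : ℝ) - 1) := by
      rw [← hIoi]
      rw [← Finset.sum_subset (Finset.subset_univ (Finset.Ioi d))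
        (fun i _ hi => by
          simp only [Finset.mem_Ioi] at hi
          simp [hc, hi])]
      apply Finset.sum_congr rfl
      intro i hi
      simp only [Finset.mem_Ioi] at hi
      simp only [hc, if_pos hi, hcast i]
    have hsc' : ∑ i : Fin p, w i * c' i = ∏ k ∈ Finset.Ici j, β k := by
      rw [Finset.sum_eq_single_of_mem d (Finset.mem_univ d)
        (fun i _ hi => by simp [hc', hi])]
      simp only [hc', if_pos rfl, Nat.cast_one, mul_one, hw]
      rw [hIoi]
    calc ∑ i ∈ Finset.Ici j, w i * ((⌈β i⌉ : ℝ) - 1)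
        = ∑ i : Fin p, w i * c i := hsc.symm
      _ ≤ ∑ i : Fin p, w i * c' i := key
      _ = ∏ k ∈ Finset.Ici j, β k := hsc'
  · -- condition → monotone
    intro h c c' hc hc' ⟨d, hpre, hlt⟩
    -- key bound
    have key : ∑ i ∈ Finset.Ioi d, w i * ((⌈β i⌉ : ℝ) - 1) ≤ w d := by
      by_cases h1 : (d : ℕ) + 1 < p
      · set j : Fin p := ⟨(d : ℕ) + 1, h1⟩ with hj
        have hIoi : Finset.Ioi d = Finset.Ici j := by
          ext i
          simp only [Finset.mem_Ioi, Finset.mem_Ici, Fin.lt_def, Fin.le_def, hj]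
          omega
        by_cases h2 : (j : ℕ) ≤ p - 2
        · have := h j (by simp [hj]) h2
          rw [hIoi]
          calc ∑ i ∈ Finset.Ici j, w i * ((⌈β i⌉ : ℝ) - 1)
              ≤ ∏ k ∈ Finset.Ici j, β k := this
            _ = w d := by rw [hw]; simp only [← hIoi]
        · -- j = p - 1, i.e. d = p - 2 : Ioi d = {last}
          have hjd : (j : ℕ) = (d : ℕ) + 1 := rfl
          have hjval : (j : ℕ) = p - 1 := by have := j.isLt; omega
          have hd2 : (d : ℕ) + 1 = p - 1 := by omega
          have hsingle : Finset.Ioi d = {j} := by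
            ext i
            have := i.isLt
            simp only [Finset.mem_Ioi, Finset.mem_singleton, Fin.lt_def, Fin.ext_iff, hjd]
            omega
          have hwj : w j = 1 := by
            simp only [hw]
            apply Finset.prod_eq_one
            intro k hk
            simp only [Finset.mem_Ioi, Fin.lt_def, hjval] at hk
            have := k.isLt
            omega
          rw [hsingle, Finset.sum_singleton, hwj, one_mul]
          have hceil := Int.ceil_lt_add_one (β j)
          have h3 : (⌈β j⌉ : ℝ) - 1 ≤ β j := by
            have : (⌈β j⌉ : ℝ) < β j + 1 := by exact_mod_cast hceil
            linarith
          have hwd : w d = β j := by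
            simp only [hw, hsingle, Finset.prod_singleton]
          rw [hwd]
          exact h3
      · -- d is the last index
        have hempty : Finset.Ioi d = ∅ := by
          ext i
          simp only [Finset.mem_Ioi, Finset.notMem_empty, iff_false, Fin.lt_def]
          have := i.isLt
          omega
        rw [hempty, Finset.sum_empty]
        exact le_of_lt (hwpos d)
    have hcnn : ∀ i, (0:ℝ) ≤ (c' i : ℝ) := fun i => Nat.cast_nonneg _
    have hsum_le : ∑ i ∈ Finset.Ioi d, w i * c i ≤
        ∑ i ∈ Finset.Ioi d, w i * ((⌈β i⌉ : ℝ) - 1) :=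
      Finset.sum_le_sum fun i _ =>
        mul_le_mul_of_nonneg_left (hc i) (le_of_lt (hwpos i))
    have hsum_nn : (0:ℝ) ≤ ∑ i ∈ Finset.Ioi d, w i * c' i :=
      Finset.sum_nonneg fun i _ =>
        mul_nonneg (le_of_lt (hwpos i)) (hcnn i)
    have hIio : ∑ i ∈ Finset.Iio d, w i * (c i : ℝ) =
        ∑ i ∈ Finset.Iio d, w i * (c' i : ℝ) := by
      apply Finset.sum_congr rfl
      intro i hi
      rw [hpre i (Finset.mem_Iio.mp hi)]
    have hdig : (c d : ℝ) + 1 ≤ (c' d : ℝ) := by exact_mod_cast hlt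
    have hd1 : w d * c d + w d ≤ w d * c' d := by
      have := mul_le_mul_of_nonneg_left hdig (le_of_lt (hwpos d))
      linarith [this]
    rw [fin_sum_split p d (fun i => w i * c i), fin_sum_split p d (fun i => w i * c' i)]
    linarith [hsum_le, key, hsum_nn, hIio, hd1]
end

section
/- If (c₀,…,c_{p-1}) and (c₀',…,c_{p-1}') are lexicographically consecutive elements of ∏_{i=0}^{p-1} {0,…,⌈β_i⌉−1} (with the first lexicographically smaller), then f_β(c₀',…,c_{p-1}') − f_β(c₀,…,c_{p-1}) ≤ 1, where f_β(c) = Σ_{i=0}^{p-1} β_{p-1}⋯β_{i+1} c_i and all β_i > 1. -/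
lemma tele (p : ℕ) (β : Fin p → ℝ) (j : Fin p) :
    ∑ k ∈ Finset.Ioi j, (∏ l ∈ Finset.Ioi k, β l) * (β k - 1)
      = (∏ l ∈ Finset.Ioi j, β l) - 1 := by
  induction' hn : p - 1 - j.val with n ih generalizing j
  · have h : Finset.Ioi j = ∅ := by
      apply Finset.eq_empty_of_forall_notMem
      intro k hk
      rw [Finset.mem_Ioi, Fin.lt_def] at hk
      have := k.isLt
      omega
    simp [h]
  · have hj1 : j.val + 1 < p := by have := j.isLt; omega
    set j' : Fin p := ⟨j.val + 1, hj1⟩ with hj'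
    have hins : Finset.Ioi j = insert j' (Finset.Ioi j') := by
      ext k
      simp only [Finset.mem_Ioi, Finset.mem_insert, Fin.lt_def, Fin.ext_iff, hj']
      omega
    have hnm : j' ∉ Finset.Ioi j' := by simp
    rw [hins, Finset.sum_insert hnm, Finset.prod_insert hnm, ih j' (by simp [hj']; omega)]
    ring

/-- if `c` and `c'` are lexicographically consecutive admissible
digit tuples (with `c` smaller), then `f_β(c') − f_β(c) ≤ 1`, where
`f_β(c) = Σᵢ β_{p-1}⋯β_{i+1} cᵢ`. -/
theorem f_beta_consecutive_diff_le_one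
    (p : ℕ) (β : Fin p → ℝ) (hβ : ∀ i, 1 < β i)
    (c c' : Fin p → ℕ)
    (hc : ∀ i, (c i : ℝ) ≤ (⌈β i⌉ : ℝ) - 1)
    (hc' : ∀ i, (c' i : ℝ) ≤ (⌈β i⌉ : ℝ) - 1)
    (j : Fin p)
    (heqlt : ∀ k : Fin p, k < j → c k = c' k)
    (hstep : c' j = c j + 1)
    (htop : ∀ k : Fin p, j < k → (c k : ℝ) = (⌈β k⌉ : ℝ) - 1)
    (hzero : ∀ k : Fin p, j < k → c' k = 0) :
    (∑ i : Fin p, (∏ l ∈ Finset.Ioi i, β l) * c' i) -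
        ∑ i : Fin p, (∏ l ∈ Finset.Ioi i, β l) * c i ≤ 1 := by
  rw [← Finset.sum_sub_distrib]
  have h1 : ∀ i : Fin p,
      (∏ l ∈ Finset.Ioi i, β l) * c' i - (∏ l ∈ Finset.Ioi i, β l) * c i
        = (∏ l ∈ Finset.Ioi i, β l) * ((c' i : ℝ) - c i) := by intro i; ring
  simp only [h1]
  have hsub : ∀ i ∈ (Finset.univ : Finset (Fin p)), i ∉ Finset.Ici j →
      (∏ l ∈ Finset.Ioi i, β l) * ((c' i : ℝ) - c i) = 0 := by
    intro i _ hi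
    rw [Finset.mem_Ici] at hi
    rw [heqlt i (lt_of_not_ge hi)]
    ring
  rw [← Finset.sum_subset (Finset.subset_univ _) hsub, ← Finset.Ioi_insert,
    Finset.sum_insert (by simp)]
  have hjterm : (∏ l ∈ Finset.Ioi j, β l) * ((c' j : ℝ) - c j)
      = ∏ l ∈ Finset.Ioi j, β l := by
    rw [hstep]; push_cast; ring
  rw [hjterm]
  have hkterm : ∀ k ∈ Finset.Ioi j,
      (∏ l ∈ Finset.Ioi k, β l) * ((c' k : ℝ) - c k)
        = -((∏ l ∈ Finset.Ioi k, β l) * ((⌈β k⌉ : ℝ) - 1)) := by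
    intro k hk
    rw [Finset.mem_Ioi] at hk
    rw [hzero k hk, htop k hk]
    push_cast
    ring
  rw [Finset.sum_congr rfl hkterm, Finset.sum_neg_distrib]
  have hle : ∑ k ∈ Finset.Ioi j, (∏ l ∈ Finset.Ioi k, β l) * (β k - 1)
      ≤ ∑ k ∈ Finset.Ioi j, (∏ l ∈ Finset.Ioi k, β l) * ((⌈β k⌉ : ℝ) - 1) := by
    apply Finset.sum_le_sum
    intro k _
    have hpos : 0 < ∏ l ∈ Finset.Ioi k, β l :=
      Finset.prod_pos fun l _ => lt_trans one_pos (hβ l)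
    have : β k ≤ (⌈β k⌉ : ℝ) := Int.le_ceil _
    nlinarith
  have := tele p β j
  linarith
end

section
/- Let β = (β₀,…,β_{p-1}) be an alternate base and x ∈ [0, x_β). Then T_{β_{p-1}⋯β₀, Δ_β}(x) ≤ π₂ ∘ T_β^p ∘ δ₀(x), where T_{B,Δ} is the greedy (B,Δ)-transformation for B = β_{p-1}⋯β₀ and digit set Δ_β, and T_β is the extended greedy β-transformation. -/
open Fin.NatCast in
/-- for `x ∈ [0, x_β)`, the greedy `(β_{p-1}⋯β₀, Δ_β)`-
transformation is dominated by `p` steps of the extended greedy alternate-base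
transformation: `T_{β_{p-1}⋯β₀,Δ_β}(x) = (∏β)·x − d ≤ π₂(T_β^p(0,x))`, where
`d` is the greatest element of `Δ_β` with `d/(β_{p-1}⋯β₀) ≤ x`. -/
theorem greedy_product_le_iterate
    (p : ℕ) [NeZero p] (β : Fin p → ℝ) (hβ : ∀ i, 1 < β i)
    (xB : Fin p → ℝ)
    (hxB1 : ∀ i, 1 ≤ xB i)
    (hxBrec : ∀ i : Fin p, xB i = (xB (i + 1) + (⌈β i⌉ : ℝ) - 1) / β i)
    (T : Fin p × ℝ → Fin p × ℝ)
    (hT : ∀ (i : Fin p) (x : ℝ), T (i, x) =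
      (i + 1, if x < 1 then β i * x - ⌊β i * x⌋ else β i * x - ((⌈β i⌉ : ℝ) - 1)))
    (x : ℝ) (hx0 : 0 ≤ x) (hx1 : x < xB 0)
    (Δ : Set ℝ)
    (hΔ : Δ = {y | ∃ c : Fin p → ℕ,
      (∀ i, (c i : ℝ) ≤ (⌈β i⌉ : ℝ) - 1) ∧
      y = ∑ i : Fin p, (∏ j ∈ Finset.Ioi i, β j) * c i})
    (d : ℝ) (hd : d ∈ Δ)
    (hdle : d / ∏ i : Fin p, β i ≤ x)
    (hdmax : ∀ d' ∈ Δ, d' / ∏ i : Fin p, β i ≤ x → d' ≤ d) :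
    (∏ i : Fin p, β i) * x - d ≤ (T^[p] (0, x)).2 := by
  have hβ0 : ∀ i, (0:ℝ) < β i := fun i => lt_trans one_pos (hβ i)
  have hBpos : (0:ℝ) < ∏ i : Fin p, β i := Finset.prod_pos (fun i _ => hβ0 i)
  have hceil1 : ∀ i : Fin p, (1:ℝ) ≤ (⌈β i⌉ : ℝ) := by
    intro i
    exact_mod_cast Int.ceil_pos.mpr (hβ0 i)
  set B := ∏ i : Fin p, β i with hB
  -- tail products
  set R : ℕ → ℝ := fun k => ∏ j ∈ Finset.univ.filter (fun j : Fin p => k ≤ j.val), β j with hR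
  have hR0 : R 0 = B := by
    simp [hR, hB, Finset.filter_true_of_mem]
  have hRp : R p = 1 := by
    have : Finset.univ.filter (fun j : Fin p => p ≤ j.val) = ∅ := by
      apply Finset.eq_empty_of_forall_notMem
      intro j hj
      simp only [Finset.mem_filter] at hj
      exact absurd hj.2 (not_le.mpr j.isLt)
    simp [hR, this]
  have hRstep : ∀ k (hk : k < p), R k = β ⟨k, hk⟩ * R (k+1) := by
    intro k hk
    have hset : Finset.univ.filter (fun j : Fin p => k ≤ j.val)
        = insert ⟨k, hk⟩ (Finset.univ.filter (fun j : Fin p => k+1 ≤ j.val)) := by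
      ext j
      simp only [Finset.mem_filter, Finset.mem_insert, Finset.mem_univ, true_and, Fin.ext_iff]
      omega
    simp only [hR]
    rw [hset, Finset.prod_insert (by simp)]
  have hIoi : ∀ k (hk : k < p), (∏ j ∈ Finset.Ioi (⟨k, hk⟩ : Fin p), β j) = R (k+1) := by
    intro k hk
    apply Finset.prod_congr _ (fun _ _ => rfl)
    ext j
    simp only [Finset.mem_Ioi, Finset.mem_filter, Finset.mem_univ, true_and, Fin.lt_def]
    omega
  have hcast : ∀ k (hk : k < p), ((k : ℕ) : Fin p) = ⟨k, hk⟩ := by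
    intro k hk
    ext
    simp [Fin.val_natCast, Nat.mod_eq_of_lt hk]
  have key : ∀ k, k ≤ p → ∃ c : Fin p → ℕ,
      (∀ i, (c i : ℝ) ≤ (⌈β i⌉ : ℝ) - 1) ∧
      (∀ i : Fin p, k ≤ i.val → c i = 0) ∧
      (T^[k] (0, x)).1 = ((k : ℕ) : Fin p) ∧
      0 ≤ (T^[k] (0, x)).2 ∧
      (T^[k] (0, x)).2 < xB ((k : ℕ) : Fin p) ∧
      B * x - R k * (T^[k] (0, x)).2
        = ∑ i : Fin p, (∏ j ∈ Finset.Ioi i, β j) * (c i : ℝ) := by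
    intro k
    induction k with
    | zero =>
      intro _
      refine ⟨0, ?_, by simp, by simp, by simpa using hx0, by simpa using hx1, ?_⟩
      · intro i; simpa using hceil1 i
      · simp [hR0]
    | succ k ih =>
      intro hk1
      have hk : k < p := hk1
      obtain ⟨c, hcb, hc0, h1, hy0, hylt, hsum⟩ := ih (le_of_lt hk)
      set y := (T^[k] (0, x)).2 with hy
      set i₀ : Fin p := ⟨k, hk⟩ with hi₀
      have hki : ((k : ℕ) : Fin p) = i₀ := hcast k hk
      have hstep : T^[k+1] (0, x) = T (i₀, y) := by
        rw [Function.iterate_succ_apply']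
        congr 1
        rw [← hki, ← h1, hy]
      have hTi := hT i₀ y
      have hsucc : i₀ + 1 = (((k+1 : ℕ)) : Fin p) := by
        rw [← hki]; push_cast; ring
      -- common pieces
      have hxBi : β i₀ * xB i₀ = xB (i₀ + 1) + (⌈β i₀⌉ : ℝ) - 1 := by
        rw [hxBrec i₀, mul_div_cancel₀ _ (ne_of_gt (hβ0 i₀))]
      by_cases hylt1 : y < 1
      · -- fractional case
        set m : ℤ := ⌊β i₀ * y⌋ with hm
        have hm0 : 0 ≤ m := Int.floor_nonneg.mpr (mul_nonneg (hβ0 i₀).le hy0)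
        have hmlt : m < ⌈β i₀⌉ := by
          rw [Int.lt_ceil]
          calc (m : ℝ) ≤ β i₀ * y := Int.floor_le _
            _ < β i₀ * 1 := by
                apply mul_lt_mul_of_pos_left hylt1 (hβ0 i₀)
            _ = β i₀ := mul_one _
        set δ : ℕ := m.toNat with hδ
        have hδr : (δ : ℝ) = (m : ℝ) := by
          rw [hδ]; exact_mod_cast Int.toNat_of_nonneg hm0
        refine ⟨Function.update c i₀ δ, ?_, ?_, ?_, ?_, ?_, ?_⟩
        · intro i
          rcases eq_or_ne i i₀ with rfl | hne
          · rw [Function.update_self, hδr]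
            have : m ≤ ⌈β i₀⌉ - 1 := by omega
            calc (m:ℝ) ≤ ((⌈β i₀⌉ - 1 : ℤ) : ℝ) := by exact_mod_cast this
              _ = (⌈β i₀⌉ : ℝ) - 1 := by push_cast; ring
          · rw [Function.update_of_ne hne]; exact hcb i
        · intro i hi
          have hne : i ≠ i₀ := by
            rw [hi₀]; intro h; subst h; simp at hi
          rw [Function.update_of_ne hne]
          exact hc0 i (by omega)
        · rw [hstep, hTi]; exact hsucc
        · rw [hstep, hTi]
          simp only [if_pos hylt1]
          exact Int.fract_nonneg (β i₀ * y)
        · rw [hstep, hTi]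
          simp only [if_pos hylt1]
          calc β i₀ * y - (⌊β i₀ * y⌋ : ℝ) < 1 := Int.fract_lt_one (β i₀ * y)
            _ ≤ xB (((k+1:ℕ)) : Fin p) := hxB1 _
        · rw [hstep, hTi]
          simp only [if_pos hylt1]
          have hRk : R k = β i₀ * R (k+1) := hRstep k hk
          have hsum2 : ∑ i : Fin p, (∏ j ∈ Finset.Ioi i, β j) * ((Function.update c i₀ δ i : ℕ) : ℝ)
              = (∑ i : Fin p, (∏ j ∈ Finset.Ioi i, β j) * (c i : ℝ)) + R (k+1) * (δ : ℝ) := by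
            rw [← Finset.add_sum_erase _ _ (Finset.mem_univ i₀),
                ← Finset.add_sum_erase _ (fun i => (∏ j ∈ Finset.Ioi i, β j) * (c i : ℝ))
                  (Finset.mem_univ i₀)]
            have hci₀ : c i₀ = 0 := hc0 i₀ (le_refl k)
            rw [Function.update_self, hci₀, hIoi k hk]
            have : ∀ i ∈ Finset.univ.erase i₀,
                (∏ j ∈ Finset.Ioi i, β j) * ((Function.update c i₀ δ i : ℕ) : ℝ)
                = (∏ j ∈ Finset.Ioi i, β j) * (c i : ℝ) := by
              intro i hi
              rw [Function.update_of_ne (Finset.ne_of_mem_erase hi)]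
            rw [Finset.sum_congr rfl this]
            ring
          rw [hsum2, ← hsum, hRk, hδr]
          simp only [hm]
          ring
      · -- quasi-greedy case
        push_neg at hylt1
        set δ : ℕ := (⌈β i₀⌉ - 1).toNat with hδ
        have hc1 : (1:ℝ) ≤ (⌈β i₀⌉ : ℝ) := hceil1 i₀
        have hc1' : (1:ℤ) ≤ ⌈β i₀⌉ := by exact_mod_cast hc1
        have hδr : (δ : ℝ) = (⌈β i₀⌉ : ℝ) - 1 := by
          rw [hδ]
          have : ((⌈β i₀⌉ - 1).toNat : ℤ) = ⌈β i₀⌉ - 1 := Int.toNat_of_nonneg (by omega)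
          have := congrArg (fun z : ℤ => (z : ℝ)) this
          push_cast at this
          exact this
        refine ⟨Function.update c i₀ δ, ?_, ?_, ?_, ?_, ?_, ?_⟩
        · intro i
          rcases eq_or_ne i i₀ with rfl | hne
          · rw [Function.update_self, hδr]
          · rw [Function.update_of_ne hne]; exact hcb i
        · intro i hi
          have hne : i ≠ i₀ := by
            rw [hi₀]; intro h; subst h; simp at hi
          rw [Function.update_of_ne hne]
          exact hc0 i (by omega)
        · rw [hstep, hTi]; exact hsucc
        · rw [hstep, hTi]
          simp only [if_neg (not_lt.mpr hylt1)]
          have h1 : β i₀ ≤ β i₀ * y := le_mul_of_one_le_right (hβ0 i₀).le hylt1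
          have h2 : (⌈β i₀⌉ : ℝ) < β i₀ + 1 := Int.ceil_lt_add_one _
          linarith
        · rw [hstep, hTi]
          simp only [if_neg (not_lt.mpr hylt1)]
          have hylt' : y < xB i₀ := by rwa [hki] at hylt
          have : β i₀ * y < β i₀ * xB i₀ := mul_lt_mul_of_pos_left hylt' (hβ0 i₀)
          rw [hxBi] at this
          rw [← hsucc]
          linarith
        · rw [hstep, hTi]
          simp only [if_neg (not_lt.mpr hylt1)]
          have hRk : R k = β i₀ * R (k+1) := hRstep k hk
          have hsum2 : ∑ i : Fin p, (∏ j ∈ Finset.Ioi i, β j) * ((Function.update c i₀ δ i : ℕ) : ℝ)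
              = (∑ i : Fin p, (∏ j ∈ Finset.Ioi i, β j) * (c i : ℝ)) + R (k+1) * (δ : ℝ) := by
            rw [← Finset.add_sum_erase _ _ (Finset.mem_univ i₀),
                ← Finset.add_sum_erase _ (fun i => (∏ j ∈ Finset.Ioi i, β j) * (c i : ℝ))
                  (Finset.mem_univ i₀)]
            have hci₀ : c i₀ = 0 := hc0 i₀ (le_refl k)
            rw [Function.update_self, hci₀, hIoi k hk]
            have : ∀ i ∈ Finset.univ.erase i₀,
                (∏ j ∈ Finset.Ioi i, β j) * ((Function.update c i₀ δ i : ℕ) : ℝ)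
                = (∏ j ∈ Finset.Ioi i, β j) * (c i : ℝ) := by
              intro i hi
              rw [Function.update_of_ne (Finset.ne_of_mem_erase hi)]
            rw [Finset.sum_congr rfl this]
            ring
          rw [hsum2, ← hsum, hRk, hδr]
          ring
  obtain ⟨c, hcb, -, -, hy0, -, hsum⟩ := key p le_rfl
  rw [hRp, one_mul] at hsum
  set f : ℝ := ∑ i : Fin p, (∏ j ∈ Finset.Ioi i, β j) * (c i : ℝ) with hf
  have hfΔ : f ∈ Δ := by
    rw [hΔ]
    exact ⟨c, hcb, rfl⟩
  have hfle : f / B ≤ x := by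
    rw [div_le_iff₀ hBpos]
    have : f = B * x - (T^[p] (0, x)).2 := hsum.symm
    linarith [hy0]
  have := hdmax f hfΔ hfle
  linarith [hsum]
end

section
/- Let β = (β₀,…,β_{p-1}) be an alternate base such that f_β : ∏_{i=0}^{p-1} {0,…,⌈β_i⌉−1} → ℝ, c ↦ Σ_i β_{p-1}⋯β_{i+1} c_i, is non-decreasing for the lexicographic order. Then for all x ∈ [0, x_β), T_{β_{p-1}⋯β₀, Δ_β}(x) = π₂ ∘ T_β^p ∘ δ₀(x). -/
open Fin.NatCast

private lemma prod_Ioi_eq_aux (p : ℕ) [NeZero p] (β : Fin p → ℝ) (i : Fin p) :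
    ∏ j ∈ Finset.Ioi i, β j = ∏ n ∈ Finset.Ico ((i:ℕ)+1) p, β (n : Fin p) := by
  refine Finset.prod_nbij' (fun j => (j : ℕ)) (fun n => (n : Fin p)) ?_ ?_ ?_ ?_ ?_
  · intro a ha
    simp only [Finset.mem_Ioi, Fin.lt_def] at ha
    exact Finset.mem_Ico.mpr ⟨ha, a.isLt⟩
  · intro n hn
    simp only [Finset.mem_Ico] at hn
    simp only [Finset.mem_Ioi, Fin.lt_def, Fin.val_cast_of_lt hn.2]
    omega
  · intro a _; exact Fin.cast_val_eq_self a
  · intro n hn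
    exact Fin.val_cast_of_lt (Finset.mem_Ico.mp hn).2
  · intro a _; rw [Fin.cast_val_eq_self]

/-- if `f_β` is non-decreasing for the lexicographic order, then
the greedy `(β_{p-1}⋯β₀, Δ_β)`-transformation coincides with `p` steps of the
extended greedy alternate-base transformation on `[0, x_β)`. -/
theorem greedy_product_eq_iterate_of_monotone
    (p : ℕ) [NeZero p] (β : Fin p → ℝ) (hβ : ∀ i, 1 < β i)
    (xB : Fin p → ℝ)
    (hxB1 : ∀ i, 1 ≤ xB i)
    (hxBrec : ∀ i : Fin p, xB i = (xB (i + 1) + (⌈β i⌉ : ℝ) - 1) / β i)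
    (T : Fin p × ℝ → Fin p × ℝ)
    (hT : ∀ (i : Fin p) (x : ℝ), T (i, x) =
      (i + 1, if x < 1 then β i * x - ⌊β i * x⌋ else β i * x - ((⌈β i⌉ : ℝ) - 1)))
    (x : ℝ) (hx0 : 0 ≤ x) (hx1 : x < xB 0)
    (Δ : Set ℝ)
    (hΔ : Δ = {y | ∃ c : Fin p → ℕ,
      (∀ i, (c i : ℝ) ≤ (⌈β i⌉ : ℝ) - 1) ∧
      y = ∑ i : Fin p, (∏ j ∈ Finset.Ioi i, β j) * c i})
    (d : ℝ) (hd : d ∈ Δ)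
    (hdle : d / ∏ i : Fin p, β i ≤ x)
    (hdmax : ∀ d' ∈ Δ, d' / ∏ i : Fin p, β i ≤ x → d' ≤ d)
    (hmono : ∀ c c' : Fin p → ℕ,
      (∀ i, (c i : ℝ) ≤ (⌈β i⌉ : ℝ) - 1) →
      (∀ i, (c' i : ℝ) ≤ (⌈β i⌉ : ℝ) - 1) →
      (∃ j : Fin p, (∀ k : Fin p, k < j → c k = c' k) ∧ c j < c' j) →
      ∑ i : Fin p, (∏ j ∈ Finset.Ioi i, β j) * c i ≤
        ∑ i : Fin p, (∏ j ∈ Finset.Ioi i, β j) * c' i) :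
    (∏ i : Fin p, β i) * x - d = (T^[p] (0, x)).2 := by
  classical
  have hp : 0 < p := NeZero.pos p
  set b : ℕ → ℝ := fun n => β (n : Fin p) with hbdef
  have hb1 : ∀ n, 1 < b n := fun n => hβ _
  have hb0 : ∀ n, 0 < b n := fun n => lt_trans one_pos (hb1 n)
  have hbval : ∀ i : Fin p, b (i : ℕ) = β i := fun i => by
    simp only [hbdef, Fin.cast_val_eq_self]
  set X : ℕ → ℝ := fun k => (T^[k] (0, x)).2 with hXdef
  set Dig : ℕ → ℝ := fun k =>
    if X k < 1 then (⌊b k * X k⌋ : ℝ) else ((⌈b k⌉ : ℝ)) - 1 with hDigdef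
  have hX0 : X 0 = x := rfl
  have hfst : ∀ k : ℕ, (T^[k] (0, x)).1 = (k : Fin p) := by
    intro k; induction k with
    | zero => simp
    | succ k ih =>
      rw [Function.iterate_succ_apply']
      have h1 : T^[k] (0, x) = ((k : Fin p), X k) := Prod.ext ih rfl
      rw [h1, hT, Nat.cast_succ]
  have hrec : ∀ k, X (k+1) = b k * X k - Dig k := by
    intro k
    have h1 : T^[k] (0, x) = ((k : Fin p), X k) := Prod.ext (hfst k) rfl
    have h2 : X (k+1) = (T (T^[k] (0, x))).2 := by
      simp only [hXdef, Function.iterate_succ_apply']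
    rw [h2, h1, hT]
    simp only [hDigdef, hbdef]
    split_ifs <;> simp
  have hinv : ∀ k, 0 ≤ X k ∧ X k < xB (k : Fin p) := by
    intro k; induction k with
    | zero => rw [hX0]; simpa using ⟨hx0, hx1⟩
    | succ k ih =>
      have hk := hrec k
      by_cases h : X k < 1
      · have hD : Dig k = (⌊b k * X k⌋ : ℝ) := if_pos h
        rw [hk, hD]
        constructor
        · exact sub_nonneg.mpr (Int.floor_le _)
        · calc b k * X k - (⌊b k * X k⌋ : ℝ) < 1 := by
                have := Int.lt_floor_add_one (b k * X k); linarith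
            _ ≤ xB ((k+1 : ℕ) : Fin p) := hxB1 _
      · have hD : Dig k = ((⌈b k⌉ : ℝ)) - 1 := if_neg h
        push_neg at h
        have hceil : (⌈b k⌉ : ℝ) < b k + 1 := Int.ceil_lt_add_one _
        have hceil2 : b k ≤ (⌈b k⌉ : ℝ) := Int.le_ceil _
        have hub : X k < xB (k : Fin p) := ih.2
        have hxr := hxBrec ((k : ℕ) : Fin p)
        rw [hk, hD]
        constructor
        · nlinarith [hb0 k]
        · have h5 : X k < (xB (((k:ℕ) : Fin p) + 1) + (⌈b k⌉ : ℝ) - 1) / b k := by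
            rw [hxr] at hub; exact hub
          rw [lt_div_iff₀ (hb0 k)] at h5
          have hcast : (((k:ℕ) : Fin p) + 1) = (((k+1 : ℕ)) : Fin p) := by
            rw [Nat.cast_succ]
          rw [hcast] at h5
          nlinarith [hb0 k]
  have hDig0 : ∀ k, 0 ≤ Dig k := by
    intro k
    have h0 : 0 ≤ b k * X k := mul_nonneg (le_of_lt (hb0 k)) (hinv k).1
    simp only [hDigdef]
    split_ifs with h
    · exact_mod_cast Int.floor_nonneg.mpr h0
    · have : b k ≤ (⌈b k⌉ : ℝ) := Int.le_ceil _
      have := hb1 k; linarith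
  have hDigle : ∀ k, Dig k ≤ (⌈b k⌉ : ℝ) - 1 := by
    intro k
    simp only [hDigdef]
    split_ifs with h
    · have h1 : b k * X k < b k := by
        nlinarith [hb0 k]
      have h2 : (⌊b k * X k⌋ : ℝ) < (⌈b k⌉ : ℝ) := by
        calc (⌊b k * X k⌋ : ℝ) ≤ b k * X k := Int.floor_le _
          _ < b k := h1
          _ ≤ _ := Int.le_ceil _
      have h3 : ⌊b k * X k⌋ < ⌈b k⌉ := by exact_mod_cast h2
      have h4 : ⌊b k * X k⌋ ≤ ⌈b k⌉ - 1 := by omega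
      have : ((⌊b k * X k⌋ : ℤ) : ℝ) ≤ ((⌈b k⌉ - 1 : ℤ) : ℝ) := by exact_mod_cast h4
      push_cast at this; linarith
    · exact le_rfl
  have hgreedy : ∀ k, X k < 1 → b k * X k < Dig k + 1 := by
    intro k h
    have hD : Dig k = (⌊b k * X k⌋ : ℝ) := if_pos h
    rw [hD]
    exact Int.lt_floor_add_one _
  have hDigNat : ∀ k, ∃ m : ℕ, (m : ℝ) = Dig k := by
    intro k
    refine ⟨(⌊Dig k⌋).toNat, ?_⟩
    have h0 := hDig0 k
    have hfl : (⌊Dig k⌋ : ℝ) = Dig k := by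
      simp only [hDigdef]
      split_ifs with h
      · rw [Int.floor_intCast]
      · have : ((⌈b k⌉ : ℝ)) - 1 = ((⌈b k⌉ - 1 : ℤ) : ℝ) := by push_cast; ring
        rw [this, Int.floor_intCast]
    have : 0 ≤ ⌊Dig k⌋ := by
      rw [← @Int.cast_nonneg_iff ℝ, hfl]; exact h0
    have h6 := Int.toNat_of_nonneg this
    calc ((⌊Dig k⌋.toNat : ℕ) : ℝ) = ((⌊Dig k⌋ : ℤ) : ℝ) := by exact_mod_cast congrArg (fun z : ℤ => (z : ℝ)) h6
      _ = Dig k := hfl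
  have htel : ∀ k, (∏ n ∈ Finset.range k, b n) * x
      = (∑ n ∈ Finset.range k, (∏ m ∈ Finset.Ico (n+1) k, b m) * Dig n) + X k := by
    intro k; induction k with
    | zero => simp [hX0]
    | succ k ih =>
      rw [Finset.prod_range_succ, Finset.sum_range_succ]
      have hx2 : X (k+1) = b k * X k - Dig k := hrec k
      have hcg : ∀ n ∈ Finset.range k, (∏ m ∈ Finset.Ico (n+1) (k+1), b m) * Dig n
           = b k * ((∏ m ∈ Finset.Ico (n+1) k, b m) * Dig n) := by
        intro n hn
        rw [Finset.prod_Ico_succ_top (Nat.succ_le_of_lt (Finset.mem_range.mp hn))]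
        ring
      rw [Finset.sum_congr rfl hcg, ← Finset.mul_sum]
      have h2 : ∏ m ∈ Finset.Ico (k+1) (k+1), b m = 1 := by simp
      rw [h2]
      linear_combination b k * ih - hx2
  choose a' ha' using hDigNat
  set a : Fin p → ℕ := fun i => a' (i : ℕ) with hadef
  have haval : ∀ i : Fin p, (a i : ℝ) = Dig (i : ℕ) := fun i => ha' _
  have habound : ∀ i : Fin p, (a i : ℝ) ≤ (⌈β i⌉ : ℝ) - 1 := by
    intro i; rw [haval i, ← hbval i]; exact hDigle _
  have hprodβ : ∏ i : Fin p, β i = ∏ n ∈ Finset.range p, b n := by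
    rw [← Fin.prod_univ_eq_prod_range (fun n => b n) p]
    exact Finset.prod_congr rfl fun i _ => (hbval i).symm
  have hPpos : ∀ s : Finset ℕ, 0 < ∏ n ∈ s, b n := fun s => Finset.prod_pos fun n _ => hb0 n
  have hsum : ∀ e : Fin p → ℕ, ∑ i : Fin p, (∏ j ∈ Finset.Ioi i, β j) * (e i : ℝ)
      = ∑ n ∈ Finset.range p, (∏ m ∈ Finset.Ico (n+1) p, b m) * (e (n : Fin p) : ℝ) := by
    intro e
    rw [← Fin.sum_univ_eq_sum_range (fun n => (∏ m ∈ Finset.Ico (n+1) p, b m) * (e (n : Fin p) : ℝ)) p]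
    refine Finset.sum_congr rfl fun i _ => ?_
    rw [prod_Ioi_eq_aux, Fin.cast_val_eq_self]
  have hfa_range : ∑ i : Fin p, (∏ j ∈ Finset.Ioi i, β j) * (a i : ℝ)
      = ∑ n ∈ Finset.range p, (∏ m ∈ Finset.Ico (n+1) p, b m) * Dig n := by
    rw [hsum a]
    refine Finset.sum_congr rfl fun n hn => ?_
    have h1 : (a (n : Fin p) : ℝ) = Dig n := by
      rw [haval, Fin.val_cast_of_lt (Finset.mem_range.mp hn)]
    rw [h1]
  have hXp0 : 0 ≤ X p := (hinv p).1
  have hfa_val : ∑ i : Fin p, (∏ j ∈ Finset.Ioi i, β j) * (a i : ℝ)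
      = (∏ i : Fin p, β i) * x - X p := by
    rw [hfa_range, hprodβ]
    linarith [htel p]
  have hβpos : 0 < ∏ i : Fin p, β i := by rw [hprodβ]; exact hPpos _
  have hfa_mem : (∑ i : Fin p, (∏ j ∈ Finset.Ioi i, β j) * (a i : ℝ)) ∈ Δ := by
    rw [hΔ]; exact ⟨a, habound, rfl⟩
  have hfa_le_d : ∑ i : Fin p, (∏ j ∈ Finset.Ioi i, β j) * (a i : ℝ) ≤ d := by
    apply hdmax _ hfa_mem
    rw [hfa_val, div_le_iff₀ hβpos]
    nlinarith [hXp0]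
  rw [hΔ] at hd
  obtain ⟨c, hcbound, hdc⟩ := hd
  have hd_le_fa : d ≤ ∑ i : Fin p, (∏ j ∈ Finset.Ioi i, β j) * (a i : ℝ) := by
    by_cases hca : c = a
    · rw [hdc, hca]
    · have hex : ∃ n : ℕ, n < p ∧ c (n : Fin p) ≠ a (n : Fin p) := by
        by_contra hcon
        push_neg at hcon
        apply hca; funext i
        have h1 := hcon (i : ℕ) i.isLt
        rwa [Fin.cast_val_eq_self] at h1
      set j := Nat.find hex with hjdef
      obtain ⟨hjp, hjne⟩ := Nat.find_spec hex
      have hagree : ∀ n, n < j → c (n : Fin p) = a (n : Fin p) := by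
        intro n hn
        have h1 := Nat.find_min hex hn
        push_neg at h1
        exact h1 (lt_trans hn hjp)
      set J : Fin p := ⟨j, hjp⟩ with hJdef
      have hJcast : ((j : ℕ) : Fin p) = J := Fin.ext (Fin.val_cast_of_lt hjp)
      have hagreeF : ∀ k : Fin p, k < J → c k = a k := by
        intro k hk
        have h1 := hagree (k : ℕ) hk
        rwa [Fin.cast_val_eq_self] at h1
      rw [hJcast] at hjne
      rcases lt_or_gt_of_ne hjne with hlt | hgt
      · rw [hdc]
        exact hmono c a hcbound habound ⟨J, hagreeF, hlt⟩
      · exfalso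
        have hXj : X j < 1 := by
          by_contra hX1
          push_neg at hX1
          have hD : Dig j = ((⌈b j⌉ : ℝ)) - 1 := if_neg (not_lt.mpr hX1)
          have h1 : (a J : ℝ) = (⌈b j⌉ : ℝ) - 1 := by rw [haval J]; exact hD
          have h2 : (c J : ℝ) ≤ (⌈b j⌉ : ℝ) - 1 := by
            show (c J : ℝ) ≤ (⌈b (J : ℕ)⌉ : ℝ) - 1
            rw [hbval J]; exact hcbound J
          have h4 : c J ≤ a J := by exact_mod_cast h2.trans_eq h1.symm
          omega
        have hg := hgreedy j hXj
        have hDja : Dig j = (a J : ℝ) := (haval J).symm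
        have htj := htel j
        set Q : ℝ := ∏ m ∈ Finset.Ico (j+1) p, b m with hQdef
        set Q' : ℝ := ∏ m ∈ Finset.Ico j p, b m with hQ'def
        have hQQ' : Q' = b j * Q := Finset.prod_eq_prod_Ico_succ_bot hjp b
        have hsplitP : (∏ n ∈ Finset.range p, b n) = (∏ n ∈ Finset.range j, b n) * Q' := by
          rw [Finset.range_eq_Ico, ← Finset.prod_Ico_consecutive b (Nat.zero_le j) (le_of_lt hjp), ← Finset.range_eq_Ico]
        have hmul : (∏ n ∈ Finset.range p, b n) * x
            = (∑ n ∈ Finset.range j, (∏ m ∈ Finset.Ico (n+1) p, b m) * Dig n) + Q' * X j := by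
          rw [hsplitP]
          have h5 : (∏ n ∈ Finset.range j, b n) * Q' * x = Q' * ((∏ n ∈ Finset.range j, b n) * x) := by ring
          rw [h5, htj, mul_add, Finset.mul_sum]
          congr 1
          refine Finset.sum_congr rfl fun n hn => ?_
          have hn' := Finset.mem_range.mp hn
          rw [← Finset.prod_Ico_consecutive b (Nat.succ_le_of_lt hn') (le_of_lt hjp)]
          ring
        have hdsum : d = ∑ n ∈ Finset.range p, (∏ m ∈ Finset.Ico (n+1) p, b m) * (c (n : Fin p) : ℝ) := by
          rw [hdc]; exact hsum c
        have hsplitd : d = (∑ n ∈ Finset.range j, (∏ m ∈ Finset.Ico (n+1) p, b m) * (c (n : Fin p) : ℝ))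
            + Q * (c J : ℝ)
            + ∑ n ∈ Finset.Ico (j+1) p, (∏ m ∈ Finset.Ico (n+1) p, b m) * (c (n : Fin p) : ℝ) := by
          rw [hdsum, Finset.range_eq_Ico,
            ← Finset.sum_Ico_consecutive _ (Nat.zero_le (j+1)) (Nat.succ_le_of_lt hjp),
            ← Finset.range_eq_Ico, Finset.sum_range_succ, hJcast]
        have hterm1 : ∀ n ∈ Finset.range j, (∏ m ∈ Finset.Ico (n+1) p, b m) * (c (n : Fin p) : ℝ)
            = (∏ m ∈ Finset.Ico (n+1) p, b m) * Dig n := by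
          intro n hn
          have hn' := Finset.mem_range.mp hn
          rw [hagree n hn', haval, Fin.val_cast_of_lt (lt_trans hn' hjp)]
        have htail : 0 ≤ ∑ n ∈ Finset.Ico (j+1) p, (∏ m ∈ Finset.Ico (n+1) p, b m) * (c (n : Fin p) : ℝ) :=
          Finset.sum_nonneg fun n _ => mul_nonneg (le_of_lt (hPpos _)) (Nat.cast_nonneg _)
        have hQpos : 0 < Q := hPpos _
        have hcJ : (a J : ℝ) + 1 ≤ (c J : ℝ) := by exact_mod_cast Nat.succ_le_of_lt hgt
        have hd_gt : (∏ n ∈ Finset.range p, b n) * x < d := by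
          rw [hmul, hsplitd, Finset.sum_congr rfl hterm1]
          have h7 : Q' * X j < Q * (c J : ℝ) := by
            rw [hQQ']
            calc b j * Q * X j = Q * (b j * X j) := by ring
              _ < Q * (Dig j + 1) := by
                  exact mul_lt_mul_of_pos_left hg hQpos
              _ = Q * ((a J : ℝ) + 1) := by rw [hDja]
              _ ≤ Q * (c J : ℝ) := mul_le_mul_of_nonneg_left hcJ (le_of_lt hQpos)
          linarith
        rw [div_le_iff₀ hβpos] at hdle
        rw [hprodβ] at hdle
        nlinarith [hd_gt, hdle]
  have hdfa : d = ∑ i : Fin p, (∏ j ∈ Finset.Ioi i, β j) * (a i : ℝ) := le_antisymm hd_le_fa hfa_le_d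
  show (∏ i : Fin p, β i) * x - d = X p
  rw [hdfa, hfa_val]
  ring
end

section
/- For p = 2 and any alternate base β = (β₀, β₁), the map f_β(c₀,c₁) = β₁c₀ + c₁ on {0,…,⌈β₀⌉−1}×{0,…,⌈β₁⌉−1} is non-decreasing for the lexicographic order, and consequently T_{β₁β₀, Δ_β}(x) = π₂ ∘ T_β² ∘ δ₀(x) for all x ∈ [0, x_β); in particular, restricted to [0,1), T_{β₁β₀, Δ_β} coincides with T_{β₁} ∘ T_{β₀}. -/
lemma alt_step (β : ℝ) (hβ : 1 < β) (x : ℝ) (hx : 0 ≤ x) :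
    ∃ a : ℕ, (a : ℝ) = (if x < 1 then ((⌊β * x⌋ : ℤ) : ℝ) else (⌈β⌉ : ℝ) - 1) ∧
      (a : ℝ) ≤ (⌈β⌉ : ℝ) - 1 ∧ (a : ℝ) ≤ β * x ∧
      ∀ c : ℕ, (c : ℝ) ≤ (⌈β⌉ : ℝ) - 1 → (c : ℝ) ≤ β * x → (c : ℝ) ≤ (a : ℝ) := by
  have hβx : 0 ≤ β * x := mul_nonneg (by linarith) hx
  have hceil : β ≤ (⌈β⌉ : ℝ) := Int.le_ceil β
  have hceil' : (⌈β⌉ : ℝ) < β + 1 := Int.ceil_lt_add_one β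
  by_cases h1 : x < 1
  · have hfl0 : 0 ≤ ⌊β * x⌋ := Int.floor_nonneg.mpr hβx
    have hcast : ((⌊β * x⌋.toNat : ℕ) : ℝ) = ((⌊β * x⌋ : ℤ) : ℝ) := by
      exact_mod_cast Int.toNat_of_nonneg hfl0
    have h2 : ((⌊β * x⌋ : ℤ) : ℝ) ≤ β * x := Int.floor_le _
    refine ⟨⌊β * x⌋.toNat, by rw [hcast]; simp [h1], ?_, by rw [hcast]; exact h2, ?_⟩
    · rw [hcast]
      have h3 : β * x < β := by nlinarith
      have h4 : ⌊β * x⌋ < ⌈β⌉ := by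
        have : ((⌊β * x⌋ : ℤ) : ℝ) < ((⌈β⌉ : ℤ) : ℝ) := by linarith
        exact_mod_cast this
      have h5 : ⌊β * x⌋ ≤ ⌈β⌉ - 1 := by omega
      have h6 : ((⌊β * x⌋ : ℤ) : ℝ) ≤ ((⌈β⌉ - 1 : ℤ) : ℝ) := by exact_mod_cast h5
      push_cast at h6
      linarith
    · intro c _ hc2
      have : (c : ℤ) ≤ ⌊β * x⌋ := Int.le_floor.mpr (by exact_mod_cast hc2)
      rw [hcast]
      exact_mod_cast this
  · push_neg at h1
    have hcnn : 0 ≤ ⌈β⌉ - 1 := by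
      have : (1 : ℤ) ≤ ⌈β⌉ := by
        have : ((1 : ℤ) : ℝ) ≤ ((⌈β⌉ : ℤ) : ℝ) := by push_cast; linarith
        exact_mod_cast this
      omega
    have hcast : (((⌈β⌉ - 1).toNat : ℕ) : ℝ) = (⌈β⌉ : ℝ) - 1 := by
      have := Int.toNat_of_nonneg hcnn
      have h7 : (((⌈β⌉ - 1).toNat : ℤ) : ℝ) = ((⌈β⌉ - 1 : ℤ) : ℝ) := by exact_mod_cast this
      push_cast at h7 ⊢
      linarith
    refine ⟨(⌈β⌉ - 1).toNat, by rw [hcast]; simp [not_lt.mpr h1], by rw [hcast], ?_, ?_⟩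
    · rw [hcast]
      have : β ≤ β * x := by nlinarith
      linarith
    · intro c hc1 _
      rw [hcast]
      exact hc1

/-- Core: the greedy digit for base `β₁β₀` equals `β₁ a₀ + a₁` where `a₀, a₁` are the
extended alternate-base digits; hence the remainders coincide. -/
lemma alt_core (β₀ β₁ : ℝ) (hβ₀ : 1 < β₀) (hβ₁ : 1 < β₁)
    (x d : ℝ) (hx : 0 ≤ x)
    (hmem : ∃ c₀ c₁ : ℕ, (c₀ : ℝ) ≤ (⌈β₀⌉ : ℝ) - 1 ∧
      (c₁ : ℝ) ≤ (⌈β₁⌉ : ℝ) - 1 ∧ d = β₁ * c₀ + c₁)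
    (hdle : d ≤ β₁ * β₀ * x)
    (hmax : ∀ c₀ c₁ : ℕ, (c₀ : ℝ) ≤ (⌈β₀⌉ : ℝ) - 1 → (c₁ : ℝ) ≤ (⌈β₁⌉ : ℝ) - 1 →
      β₁ * c₀ + c₁ ≤ β₁ * β₀ * x → β₁ * c₀ + c₁ ≤ d) :
    ∃ a₀ a₁ : ℕ,
      ((a₀ : ℝ) = if x < 1 then ((⌊β₀ * x⌋ : ℤ) : ℝ) else (⌈β₀⌉ : ℝ) - 1) ∧
      ((a₁ : ℝ) = if β₀ * x - a₀ < 1 then ((⌊β₁ * (β₀ * x - a₀)⌋ : ℤ) : ℝ)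
        else (⌈β₁⌉ : ℝ) - 1) ∧
      d = β₁ * a₀ + a₁ := by
  obtain ⟨a₀, ha₀eq, ha₀le, ha₀x, ha₀max⟩ := alt_step β₀ hβ₀ x hx
  set y : ℝ := β₀ * x - a₀ with hydef
  have hy : 0 ≤ y := by simp only [hydef]; linarith
  obtain ⟨a₁, ha₁eq, ha₁le, ha₁y, ha₁max⟩ := alt_step β₁ hβ₁ y hy
  refine ⟨a₀, a₁, ha₀eq, ha₁eq, le_antisymm ?_ ?_⟩
  · -- d ≤ β₁ a₀ + a₁
    obtain ⟨c₀, c₁, hc₀, hc₁, hdval⟩ := hmem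
    have hc₁0 : (0 : ℝ) ≤ c₁ := Nat.cast_nonneg c₁
    have hc₀a₀ : (c₀ : ℝ) ≤ (a₀ : ℝ) := by
      refine ha₀max c₀ hc₀ ?_
      nlinarith [hdval ▸ hdle]
    have hc₀a₀' : c₀ ≤ a₀ := by exact_mod_cast hc₀a₀
    rcases lt_or_eq_of_le hc₀a₀' with h | h
    · have : (c₀ : ℝ) + 1 ≤ (a₀ : ℝ) := by exact_mod_cast h
      have hceil₁ : (⌈β₁⌉ : ℝ) < β₁ + 1 := Int.ceil_lt_add_one β₁
      have ha₁0 : (0 : ℝ) ≤ a₁ := Nat.cast_nonneg a₁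
      rw [hdval]
      nlinarith
    · subst h
      have hc₁a₁ : (c₁ : ℝ) ≤ (a₁ : ℝ) := by
        refine ha₁max c₁ hc₁ ?_
        have := hdval ▸ hdle
        simp only [hydef]
        nlinarith
      rw [hdval]
      linarith
  · -- β₁ a₀ + a₁ ≤ d
    refine hmax a₀ a₁ ha₀le ha₁le ?_
    nlinarith


/-- for `p = 2` and any alternate base `(β₀, β₁)`, the map
`f_β(c₀,c₁) = β₁c₀ + c₁` is non-decreasing for the lexicographic order on
admissible digit pairs; consequently the greedy `(β₁β₀, Δ_β)`-transformation
coincides with two steps of the extended greedy alternate-base transformation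
on `[0, x_β)`, and in particular with `T_{β₁} ∘ T_{β₀}` on `[0,1)`. -/
theorem length_two_alternate_base_coincide
    (β₀ β₁ : ℝ) (hβ₀ : 1 < β₀) (hβ₁ : 1 < β₁)
    (Δ : Set ℝ)
    (hΔ : Δ = {y | ∃ c₀ c₁ : ℕ, (c₀ : ℝ) ≤ (⌈β₀⌉ : ℝ) - 1 ∧
      (c₁ : ℝ) ≤ (⌈β₁⌉ : ℝ) - 1 ∧ y = β₁ * c₀ + c₁})
    (xB : ℝ)
    (hxB : xB = (β₁ * ((⌈β₀⌉ : ℝ) - 1) + ((⌈β₁⌉ : ℝ) - 1)) / (β₁ * β₀ - 1))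
    (S₀ S₁ : ℝ → ℝ)
    (hS₀ : ∀ y : ℝ, S₀ y =
      if y < 1 then β₀ * y - ⌊β₀ * y⌋ else β₀ * y - ((⌈β₀⌉ : ℝ) - 1))
    (hS₁ : ∀ y : ℝ, S₁ y =
      if y < 1 then β₁ * y - ⌊β₁ * y⌋ else β₁ * y - ((⌈β₁⌉ : ℝ) - 1)) :
    -- (a) lexicographic monotonicity of `f_β`
    (∀ c₀ c₁ c₀' c₁' : ℕ,
        (c₀ : ℝ) ≤ (⌈β₀⌉ : ℝ) - 1 → (c₁ : ℝ) ≤ (⌈β₁⌉ : ℝ) - 1 →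
        (c₀' : ℝ) ≤ (⌈β₀⌉ : ℝ) - 1 → (c₁' : ℝ) ≤ (⌈β₁⌉ : ℝ) - 1 →
        (c₀ < c₀' ∨ (c₀ = c₀' ∧ c₁ < c₁')) →
        β₁ * c₀ + c₁ ≤ β₁ * c₀' + c₁') ∧
    -- (b) `T_{β₁β₀,Δ_β} = π₂ ∘ T_β² ∘ δ₀` on `[0, x_β)`
    (∀ x d : ℝ, 0 ≤ x → x < xB → d ∈ Δ → d / (β₁ * β₀) ≤ x →
        (∀ d' ∈ Δ, d' / (β₁ * β₀) ≤ x → d' ≤ d) →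
        β₁ * β₀ * x - d = S₁ (S₀ x)) ∧
    -- (c) on `[0,1)` it coincides with `T_{β₁} ∘ T_{β₀}`
    (∀ x d : ℝ, 0 ≤ x → x < 1 → d ∈ Δ → d / (β₁ * β₀) ≤ x →
        (∀ d' ∈ Δ, d' / (β₁ * β₀) ≤ x → d' ≤ d) →
        β₁ * β₀ * x - d =
          β₁ * (β₀ * x - ⌊β₀ * x⌋) - ⌊β₁ * (β₀ * x - ⌊β₀ * x⌋)⌋) := by
  have hBpos : (0 : ℝ) < β₁ * β₀ := by positivity
  have hceil₁ : (⌈β₁⌉ : ℝ) < β₁ + 1 := Int.ceil_lt_add_one β₁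
  -- preprocess greedy hypotheses into the `alt_core` form
  have key : ∀ x d : ℝ, 0 ≤ x → d ∈ Δ → d / (β₁ * β₀) ≤ x →
      (∀ d' ∈ Δ, d' / (β₁ * β₀) ≤ x → d' ≤ d) →
      ∃ a₀ a₁ : ℕ,
        ((a₀ : ℝ) = if x < 1 then ((⌊β₀ * x⌋ : ℤ) : ℝ) else (⌈β₀⌉ : ℝ) - 1) ∧
        ((a₁ : ℝ) = if β₀ * x - a₀ < 1 then ((⌊β₁ * (β₀ * x - a₀)⌋ : ℤ) : ℝ)
          else (⌈β₁⌉ : ℝ) - 1) ∧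
        d = β₁ * a₀ + a₁ := by
    intro x d hx hmem hdle hmax
    rw [hΔ] at hmem
    refine alt_core β₀ β₁ hβ₀ hβ₁ x d hx hmem ?_ ?_
    · have := (div_le_iff₀ hBpos).mp hdle
      nlinarith
    · intro c₀ c₁ h0 h1 h2
      have hin : β₁ * c₀ + c₁ ∈ Δ := by rw [hΔ]; exact ⟨c₀, c₁, h0, h1, rfl⟩
      refine hmax _ hin ?_
      rw [div_le_iff₀ hBpos]
      nlinarith
  refine ⟨?_, ?_, ?_⟩
  · -- (a)
    intro c₀ c₁ c₀' c₁' h0 h1 h2 h3 hlex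
    rcases hlex with h | ⟨rfl, h⟩
    · have hc : (c₀ : ℝ) + 1 ≤ (c₀' : ℝ) := by exact_mod_cast h
      have : (0 : ℝ) ≤ c₁' := Nat.cast_nonneg _
      nlinarith
    · have : (c₁ : ℝ) < (c₁' : ℝ) := by exact_mod_cast h
      linarith
  · -- (b)
    intro x d hx _ hmem hdle hmax
    obtain ⟨a₀, a₁, ha₀eq, ha₁eq, hd⟩ := key x d hx hmem hdle hmax
    have h0 : S₀ x = β₀ * x - a₀ := by
      rw [hS₀]
      split_ifs with h
      · simp only [if_pos h] at ha₀eq; rw [ha₀eq]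
      · simp only [if_neg h] at ha₀eq; rw [ha₀eq]
    have h1 : S₁ (β₀ * x - (a₀ : ℝ)) = β₁ * (β₀ * x - a₀) - a₁ := by
      rw [hS₁]
      split_ifs with h
      · simp only [if_pos h] at ha₁eq; rw [ha₁eq]
      · simp only [if_neg h] at ha₁eq; rw [ha₁eq]
    rw [h0, h1, hd]; ring
  · -- (c)
    intro x d hx hx1 hmem hdle hmax
    obtain ⟨a₀, a₁, ha₀eq, ha₁eq, hd⟩ := key x d hx hmem hdle hmax
    simp only [if_pos hx1] at ha₀eq
    have hylt : β₀ * x - (a₀ : ℝ) < 1 := by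
      rw [ha₀eq]
      have := Int.sub_one_lt_floor (β₀ * x)
      linarith
    simp only [if_pos hylt] at ha₁eq
    rw [ha₀eq] at ha₁eq
    rw [hd, ha₀eq, ha₁eq]
    ring
end
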